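/- arXiv:2308.16111 — 9 statements merged into one kernel-verified Lean document; each statement's English description precedes it below -/
import Mathlib

section
/- Let d ≥ 2 and let y₀, y₁, ..., y_{d-1} : [0, d/2) → ℝ be differentiable functions with y₀(0) = 1, y_k(0) = 0 for 1 ≤ k ≤ d-1, satisfying y_j' = 2(y_{j-1} - y_j)/s_{d-1} for each j (with y_{-1} ≡ 0), where s_{d-1} = y₀ + ... + y_{d-1} is assumed positive. Then for all j with 0 ≤ j ≤ d-1 and all t in the domain, y_j(t) = y₀(t)·(-ln y₀(t))^j / j!. -/
open Finset

theorem stmt3 (d : ℕ) (hd : 2 ≤ d) (y : ℕ → ℝ → ℝ)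
    (hy00 : y 0 0 = 1)
    (hyk0 : ∀ k, 1 ≤ k → k ≤ d - 1 → y k 0 = 0)
    (hspos : ∀ t ∈ Set.Ico (0 : ℝ) (d / 2), 0 < ∑ k ∈ Finset.range d, y k t)
    (hy0range : ∀ t ∈ Set.Ico (0 : ℝ) (d / 2), 0 < y 0 t ∧ y 0 t ≤ 1)
    (hderiv : ∀ j, j ≤ d - 1 → ∀ t ∈ Set.Ico (0 : ℝ) (d / 2),
      HasDerivAt (y j)
        (2 * ((if j = 0 then 0 else y (j - 1) t) - y j t) / ∑ k ∈ Finset.range d, y k t) t) :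
    ∀ j, j ≤ d - 1 → ∀ t ∈ Set.Ico (0 : ℝ) (d / 2),
      y j t = y 0 t * (-Real.log (y 0 t)) ^ j / (Nat.factorial j : ℝ) := by
  have hdpos : (0:ℝ) < d / 2 := by
    have : (2:ℝ) ≤ d := by exact_mod_cast hd
    linarith
  have h0mem : (0:ℝ) ∈ Set.Ico (0:ℝ) (d/2) := ⟨le_refl _, hdpos⟩
  intro j
  induction j with
  | zero =>
    intro _ t ht
    simp
  | succ j ih =>
    intro hj1 t ht
    have hjle : j ≤ d - 1 := by omega
    have ihj : ∀ x ∈ Set.Ico (0:ℝ) (d/2),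
        y j x = y 0 x * (-Real.log (y 0 x)) ^ j / (Nat.factorial j : ℝ) := ih hjle
    set q : ℝ → ℝ := fun x =>
      y (j+1) x / y 0 x - (-Real.log (y 0 x)) ^ (j+1) / (Nat.factorial (j+1) : ℝ) with hq_def
    have hq : ∀ x ∈ Set.Ico (0:ℝ) (d/2), HasDerivAt q 0 x := by
      intro x hx
      have hSpos := hspos x hx
      have hSne : (∑ k ∈ Finset.range d, y k x) ≠ 0 := ne_of_gt hSpos
      have hy0pos := (hy0range x hx).1
      have hy0ne : y 0 x ≠ 0 := ne_of_gt hy0pos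
      have h0 : HasDerivAt (y 0)
          (2 * (0 - y 0 x) / ∑ k ∈ Finset.range d, y k x) x := by
        have := hderiv 0 (by omega) x hx
        simpa using this
      have hj1' : HasDerivAt (y (j+1))
          (2 * (y j x - y (j+1) x) / ∑ k ∈ Finset.range d, y k x) x := by
        have := hderiv (j+1) hj1 x hx
        simpa using this
      have hlog : HasDerivAt (fun u => Real.log (y 0 u))
          ((2 * (0 - y 0 x) / ∑ k ∈ Finset.range d, y k x) / y 0 x) x := h0.log hy0ne
      have hL : HasDerivAt (fun u => (-Real.log (y 0 u)) ^ (j+1))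
          (((j:ℝ)+1) * (-Real.log (y 0 x)) ^ j *
            (-((2 * (0 - y 0 x) / ∑ k ∈ Finset.range d, y k x) / y 0 x))) x := by
        have := (hlog.neg).pow (j+1)
        have e : ((-fun u => Real.log (y 0 u)) ^ (j+1)) = (fun u => (-Real.log (y 0 u)) ^ (j+1)) := rfl
        rw [e] at this
        simpa using this
      have hdiv : HasDerivAt (fun u => y (j+1) u / y 0 u)
          (((2 * (y j x - y (j+1) x) / ∑ k ∈ Finset.range d, y k x) * y 0 x -
            y (j+1) x * (2 * (0 - y 0 x) / ∑ k ∈ Finset.range d, y k x)) / y 0 x ^ 2) x :=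
        hj1'.div h0 hy0ne
      have hq' := hdiv.sub (hL.div_const (Nat.factorial (j+1) : ℝ))
      refine hq'.congr_deriv ?_
      have hyj := ihj x hx
      have hfne : (Nat.factorial j : ℝ) ≠ 0 := by positivity
      have hf1ne : (Nat.factorial (j+1) : ℝ) ≠ 0 := by positivity
      have hfact : (Nat.factorial (j+1) : ℝ) = ((j:ℝ)+1) * (Nat.factorial j : ℝ) := by
        rw [Nat.factorial_succ]; push_cast; ring
      rw [hyj, hfact]
      field_simp
      ring
    have hq0 : q 0 = 0 := by
      have hy10 : y (j+1) 0 = 0 := hyk0 (j+1) (by omega) hj1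
      simp [hq_def, hy10, hy00]
    have hconst : ‖q t - q 0‖ ≤ 0 * ‖t - 0‖ := by
      refine (convex_Ico (0:ℝ) (d/2)).norm_image_sub_le_of_norm_hasDerivWithin_le
        (f' := fun _ => 0) (fun x hx => (hq x hx).hasDerivWithinAt)
        (fun x hx => by simp) h0mem ht
    have hqt : q t = 0 := by
      rw [hq0, sub_zero] at hconst
      have : ‖q t‖ ≤ 0 := by simpa using hconst
      simpa using le_antisymm this (norm_nonneg _)
    have hy0ne : y 0 t ≠ 0 := ne_of_gt (hy0range t ht).1
    have : y (j+1) t / y 0 t = (-Real.log (y 0 t)) ^ (j+1) / (Nat.factorial (j+1) : ℝ) := by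
      have := hqt
      simp only [hq_def] at this
      linarith
    field_simp at this ⊢
    linarith
end

section
/- Under the ODE system y_j' = 2(y_{j-1} - y_j)/s_{d-1} with y₀(0)=1, y_k(0)=0 for k ≥ 1, s_{d-1} = Σ_{j=0}^{d-1} y_j positive, the quantity Σ_{j=0}^{d-1} (d-j)·y_j(t) equals d - 2t for all t in the domain. -/
open Finset

lemma tel_aux (f : ℕ → ℝ) : ∀ d : ℕ,
    ∑ j ∈ Finset.range d, ((if j = 0 then 0 else f (j-1)) - f j)
      = (if d = 0 then 0 else -f (d-1)) := by
  intro d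
  induction d with
  | zero => simp
  | succ n ih =>
    rw [Finset.sum_range_succ, ih]
    cases n with
    | zero => simp
    | succ m => simp [Nat.succ_sub_one]; ring

lemma key_aux (f : ℕ → ℝ) : ∀ d : ℕ,
    ∑ j ∈ Finset.range d, ((d : ℝ) - j) * ((if j = 0 then 0 else f (j-1)) - f j)
      = -∑ j ∈ Finset.range d, f j := by
  intro d
  induction d with
  | zero => simp
  | succ n ih =>
    have e1 : ∑ j ∈ Finset.range (n+1), (((n+1 : ℕ) : ℝ) - j) * ((if j = 0 then 0 else f (j-1)) - f j)
        = (∑ j ∈ Finset.range (n+1), ((n : ℝ) - j) * ((if j = 0 then 0 else f (j-1)) - f j))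
          + ∑ j ∈ Finset.range (n+1), ((if j = 0 then 0 else f (j-1)) - f j) := by
      rw [← Finset.sum_add_distrib]
      apply Finset.sum_congr rfl
      intro j _
      push_cast
      ring
    rw [e1, tel_aux, Finset.sum_range_succ _ n, ih, Finset.sum_range_succ _ n]
    simp
    ring

theorem stmt4 (d : ℕ) (hd : 2 ≤ d) (y : ℕ → ℝ → ℝ)
    (hy00 : y 0 0 = 1)
    (hyk0 : ∀ k, 1 ≤ k → k ≤ d - 1 → y k 0 = 0)
    (hspos : ∀ t ∈ Set.Ico (0 : ℝ) (d / 2), 0 < ∑ k ∈ Finset.range d, y k t)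
    (hderiv : ∀ j, j ≤ d - 1 → ∀ t ∈ Set.Ico (0 : ℝ) (d / 2),
      HasDerivAt (y j)
        (2 * ((if j = 0 then 0 else y (j - 1) t) - y j t) / ∑ k ∈ Finset.range d, y k t) t) :
    ∀ t ∈ Set.Ico (0 : ℝ) (d / 2),
      ∑ j ∈ Finset.range d, ((d : ℝ) - j) * y j t = d - 2 * t := by
  intro t ht
  obtain ⟨ht0, htd⟩ := ht
  set g : ℝ → ℝ := fun u => (∑ j ∈ Finset.range d, ((d : ℝ) - j) * y j u) + 2 * u with hg
  have hgderiv : ∀ x ∈ Set.Ico (0 : ℝ) (d / 2), HasDerivAt g 0 x := by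
    intro x hx
    have hs := hspos x hx
    have hsne : (∑ k ∈ Finset.range d, y k x) ≠ 0 := ne_of_gt hs
    have hsum : HasDerivAt (fun u => ∑ j ∈ Finset.range d, ((d : ℝ) - j) * y j u)
        (∑ j ∈ Finset.range d, ((d : ℝ) - j) *
          (2 * ((if j = 0 then 0 else y (j - 1) x) - y j x) / ∑ k ∈ Finset.range d, y k x)) x := by
      apply HasDerivAt.fun_sum
      intro j hj
      exact (hderiv j (Nat.le_pred_of_lt (Finset.mem_range.mp hj)) x hx).const_mul _
    have hval : (∑ j ∈ Finset.range d, ((d : ℝ) - j) *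
        (2 * ((if j = 0 then 0 else y (j - 1) x) - y j x) / ∑ k ∈ Finset.range d, y k x)) = -2 := by
      have h1 : ∀ j ∈ Finset.range d, ((d : ℝ) - j) *
          (2 * ((if j = 0 then 0 else y (j - 1) x) - y j x) / ∑ k ∈ Finset.range d, y k x)
          = (2 / ∑ k ∈ Finset.range d, y k x) *
            (((d : ℝ) - j) * ((if j = 0 then 0 else y (j - 1) x) - y j x)) := by
        intro j _
        ring
      rw [Finset.sum_congr rfl h1, ← Finset.mul_sum, key_aux (fun j => y j x) d]
      field_simp
    have h2 : HasDerivAt (fun u : ℝ => 2 * u) 2 x := by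
      simpa using (hasDerivAt_id x).const_mul (2 : ℝ)
    have := (hsum.fun_add h2)
    rw [hval] at this
    simpa using this
  have hconst : g t = g 0 := by
    rcases eq_or_lt_of_le ht0 with h | h
    · rw [← h]
    · have hsub : Set.Icc (0 : ℝ) t ⊆ Set.Ico (0 : ℝ) (d / 2) := fun x hx =>
        ⟨hx.1, lt_of_le_of_lt hx.2 htd⟩
      have hdiff : DifferentiableOn ℝ g (Set.Icc (0 : ℝ) t) := fun x hx =>
        (hgderiv x (hsub hx)).differentiableAt.differentiableWithinAt
      have hdz : ∀ x ∈ Set.Ico (0 : ℝ) t, derivWithin g (Set.Icc (0 : ℝ) t) x = 0 := by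
        intro x hx
        exact ((hgderiv x (hsub (Set.Ico_subset_Icc_self hx))).hasDerivWithinAt).derivWithin
          (uniqueDiffOn_Icc h x (Set.Ico_subset_Icc_self hx))
      exact constant_of_derivWithin_zero hdiff hdz t (Set.right_mem_Icc.mpr (le_of_lt h))
  have hg0 : g 0 = d := by
    have hsum0 : ∑ j ∈ Finset.range d, ((d : ℝ) - j) * y j 0 = d := by
      rw [Finset.sum_eq_single 0]
      · rw [hy00]; simp
      · intro j hj hne
        rw [hyk0 j (Nat.one_le_iff_ne_zero.mpr hne)
          (Nat.le_pred_of_lt (Finset.mem_range.mp hj)), mul_zero]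
      · intro h
        exact absurd (Finset.mem_range.mpr (by omega)) h
    simp [hg, hsum0]
  rw [hg0] at hconst
  simp only [hg] at hconst
  linarith
end

section
/- Let d ≥ 2 and let y₀ : [0, d/2) → (0,1] satisfy Σ_{j=0}^{d-1} y₀(t)·(-ln y₀(t))^j·(d-j)/j! = d - 2t, with y₀ continuous and decreasing. Then as t → d/2 from below, y₀(t) is asymptotic to (d-1)!·(d-2t) / (-ln(d-2t))^{d-1}. -/
open Finset Filter Real

noncomputable def Paux (d : ℕ) (X : ℝ) : ℝ :=
  ∑ j ∈ Finset.range d, X ^ j * ((d : ℝ) - j) / (Nat.factorial j : ℝ)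

lemma Paux_pos {d : ℕ} (hd : 1 ≤ d) {X : ℝ} (hX : 0 ≤ X) : 0 < Paux d X := by
  unfold Paux
  apply Finset.sum_pos'
  · intro j hj
    simp only [Finset.mem_range] at hj
    apply div_nonneg
    · apply mul_nonneg (pow_nonneg hX _)
      have : (j : ℝ) < d := by exact_mod_cast hj
      linarith
    · positivity
  · refine ⟨0, Finset.mem_range.mpr hd, ?_⟩
    simp
    positivity

lemma stepA {d : ℕ} (hd : 2 ≤ d) :
    Tendsto (fun X => Paux d X / X ^ (d - 1)) atTop
      (nhds (1 / (Nat.factorial (d - 1) : ℝ))) := by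
  have hmem : d - 1 ∈ Finset.range d := Finset.mem_range.mpr (by omega)
  have key : Tendsto (fun X => ∑ j ∈ Finset.range d,
      (X ^ j / X ^ (d - 1)) * (((d : ℝ) - j) / (Nat.factorial j : ℝ))) atTop
      (nhds (∑ j ∈ Finset.range d,
        if j = d - 1 then (1 : ℝ) / (Nat.factorial (d - 1) : ℝ) else 0)) := by
    apply tendsto_finset_sum
    intro j hj
    simp only [Finset.mem_range] at hj
    rcases eq_or_lt_of_le (Nat.lt_succ_iff.mp (by omega : j < (d - 1) + 1)) with h | h
    · subst h
      simp only [if_pos rfl]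
      have hcast : (((d - 1 : ℕ) : ℝ)) = (d : ℝ) - 1 := by
        push_cast [Nat.cast_sub (by omega : 1 ≤ d)]; ring
      apply Tendsto.congr' _ tendsto_const_nhds
      filter_upwards [eventually_gt_atTop (0 : ℝ)] with X hX
      rw [div_self (pow_ne_zero _ hX.ne'), one_mul, hcast]
      norm_num
    · simp only [if_neg (Nat.ne_of_lt h)]
      have := (tendsto_pow_div_pow_atTop_zero (𝕜 := ℝ) h).mul_const
        (((d : ℝ) - j) / (Nat.factorial j : ℝ))
      simpa using this
  have hsum : (∑ j ∈ Finset.range d,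
      if j = d - 1 then (1 : ℝ) / (Nat.factorial (d - 1) : ℝ) else 0)
      = 1 / (Nat.factorial (d - 1) : ℝ) := by
    rw [Finset.sum_ite_eq' (Finset.range d) (d - 1)]
    simp [hmem]
  rw [hsum] at key
  apply key.congr'
  filter_upwards [eventually_gt_atTop (0 : ℝ)] with X hX
  unfold Paux
  rw [Finset.sum_div]
  apply Finset.sum_congr rfl
  intro j hj
  ring


lemma stepB {d : ℕ} (hd : 2 ≤ d) :
    Tendsto (fun X => Real.log (Paux d X) / X) atTop (nhds 0) := by
  have hc : (0 : ℝ) < (Nat.factorial (d - 1) : ℝ) := by positivity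
  have h1 : Tendsto (fun X => Real.log (Paux d X / X ^ (d - 1))) atTop
      (nhds (Real.log (1 / (Nat.factorial (d - 1) : ℝ)))) :=
    (Real.continuousAt_log (by positivity)).tendsto.comp (stepA hd)
  have h2 : Tendsto (fun X => Real.log (Paux d X / X ^ (d - 1)) / X) atTop (nhds 0) :=
    h1.div_atTop tendsto_id
  have h3 : Tendsto (fun X : ℝ => ((d - 1 : ℕ) : ℝ) * (Real.log X / X)) atTop
      (nhds (((d - 1 : ℕ) : ℝ) * 0)) :=
    (Real.isLittleO_log_id_atTop.tendsto_div_nhds_zero).const_mul _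
  rw [mul_zero] at h3
  have h4 := h2.add h3
  rw [add_zero] at h4
  apply h4.congr'
  filter_upwards [eventually_gt_atTop (0 : ℝ)] with X hX
  have hP : 0 < Paux d X := Paux_pos (by omega) hX.le
  have hXn : (X : ℝ) ^ (d - 1) ≠ 0 := pow_ne_zero _ hX.ne'
  have key : Real.log (Paux d X) = Real.log (Paux d X / X ^ (d - 1))
      + ((d - 1 : ℕ) : ℝ) * Real.log X := by
    rw [show Paux d X / X ^ (d - 1) = Paux d X * (X ^ (d - 1))⁻¹ by ring,
      Real.log_mul hP.ne' (inv_ne_zero hXn), Real.log_inv, Real.log_pow]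
    ring
  rw [key]
  ring

lemma stepG {d : ℕ} (hd : 2 ≤ d) :
    Tendsto (fun X => (X - Real.log (Paux d X)) ^ (d - 1) /
      ((Nat.factorial (d - 1) : ℝ) * Paux d X)) atTop (nhds 1) := by
  have hc : (0 : ℝ) < (Nat.factorial (d - 1) : ℝ) := by positivity
  have h1 : Tendsto (fun X => (1 - Real.log (Paux d X) / X) ^ (d - 1)) atTop (nhds 1) := by
    have := ((tendsto_const_nhds (x := (1 : ℝ))).sub (stepB hd)).pow (d - 1)
    simpa using this
  have h2 : Tendsto (fun X => ((Nat.factorial (d - 1) : ℝ) * (Paux d X / X ^ (d - 1)))⁻¹)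
      atTop (nhds 1) := by
    have := (((stepA hd).const_mul ((Nat.factorial (d - 1) : ℝ))).inv₀
      (by rw [mul_one_div, div_self hc.ne']; exact one_ne_zero))
    rw [mul_one_div, div_self hc.ne', inv_one] at this
    exact this
  have h3 := h1.mul h2
  rw [mul_one] at h3
  apply h3.congr'
  filter_upwards [eventually_gt_atTop (0 : ℝ)] with X hX
  have hP : 0 < Paux d X := Paux_pos (by omega) hX.le
  have e1 : 1 - Real.log (Paux d X) / X = (X - Real.log (Paux d X)) / X := by
    field_simp
  rw [e1, div_pow, show (Nat.factorial (d - 1) : ℝ) * (Paux d X / X ^ (d - 1))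
      = ((Nat.factorial (d - 1) : ℝ) * Paux d X) / X ^ (d - 1) by ring, inv_div,
    div_mul_div_comm, mul_comm ((X - Real.log (Paux d X)) ^ (d - 1)) (X ^ (d - 1)),
    mul_comm (X ^ (d - 1)) (((Nat.factorial (d - 1) : ℝ)) * Paux d X)]
  rw [mul_comm (((Nat.factorial (d - 1) : ℝ)) * Paux d X) (X ^ (d - 1))]
  exact mul_div_mul_left _ _ (pow_ne_zero _ hX.ne')

lemma stepF (d : ℕ) (hd : 2 ≤ d) :
    Tendsto (fun y => y / ((Nat.factorial (d - 1) : ℝ) *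
        (∑ j ∈ Finset.range d, y * (-Real.log y) ^ j * ((d : ℝ) - j) / (Nat.factorial j : ℝ)) /
        (-Real.log (∑ j ∈ Finset.range d,
          y * (-Real.log y) ^ j * ((d : ℝ) - j) / (Nat.factorial j : ℝ))) ^ (d - 1)))
      (nhdsWithin 0 (Set.Ioi 0)) (nhds 1) := by
  have hX : Tendsto (fun y : ℝ => -Real.log y) (nhdsWithin 0 (Set.Ioi 0)) atTop :=
    tendsto_neg_atTop_iff.mpr Real.tendsto_log_nhdsGT_zero
  apply ((stepG hd).comp hX).congr'
  filter_upwards [Ioo_mem_nhdsGT_of_mem (by constructor <;> norm_num : (0 : ℝ) ∈ Set.Ico 0 1)]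
    with y hy
  have hy0 : 0 < y := hy.1
  have hX0 : 0 ≤ -Real.log y := by
    have : Real.log y ≤ 0 := Real.log_nonpos hy0.le hy.2.le
    linarith
  have hP : 0 < Paux d (-Real.log y) := Paux_pos (by omega) hX0
  have hfv : (∑ j ∈ Finset.range d,
      y * (-Real.log y) ^ j * ((d : ℝ) - j) / (Nat.factorial j : ℝ))
      = y * Paux d (-Real.log y) := by
    unfold Paux
    rw [Finset.mul_sum]
    exact Finset.sum_congr rfl fun j _ => by ring
  have hlog : -Real.log (y * Paux d (-Real.log y))
      = -Real.log y - Real.log (Paux d (-Real.log y)) := by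
    rw [Real.log_mul hy0.ne' hP.ne']
    ring
  simp only [Function.comp]
  rw [hfv, hlog, div_div_eq_mul_div,
    show (Nat.factorial (d - 1) : ℝ) * (y * Paux d (-Real.log y))
      = y * ((Nat.factorial (d - 1) : ℝ) * Paux d (-Real.log y)) by ring,
    mul_div_mul_left _ _ hy0.ne']

theorem stmt5 (d : ℕ) (hd : 2 ≤ d) (y0 : ℝ → ℝ)
    (hrange : ∀ t ∈ Set.Ico (0 : ℝ) (d / 2), 0 < y0 t ∧ y0 t ≤ 1)
    (hcont : ContinuousOn y0 (Set.Ico 0 (d / 2)))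
    (hanti : StrictAntiOn y0 (Set.Ico 0 ((d : ℝ) / 2)))
    (heq : ∀ t ∈ Set.Ico (0 : ℝ) (d / 2),
      ∑ j ∈ Finset.range d,
        y0 t * (-Real.log (y0 t)) ^ j * ((d : ℝ) - j) / (Nat.factorial j : ℝ) = d - 2 * t)
    (hlim : Tendsto y0 (nhdsWithin ((d : ℝ) / 2) (Set.Iio ((d : ℝ) / 2))) (nhds 0)) :
    Tendsto
      (fun t => y0 t /
        ((Nat.factorial (d - 1) : ℝ) * ((d : ℝ) - 2 * t) / (-Real.log ((d : ℝ) - 2 * t)) ^ (d - 1)))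
      (nhdsWithin ((d : ℝ) / 2) (Set.Iio ((d : ℝ) / 2))) (nhds 1) := by
  have hhalf : (0 : ℝ) < (d : ℝ) / 2 := by
    have : (0 : ℝ) < (d : ℝ) := by exact_mod_cast Nat.lt_of_lt_of_le Nat.zero_lt_two hd
    linarith
  have hmem : ∀ᶠ t in nhdsWithin ((d : ℝ) / 2) (Set.Iio ((d : ℝ) / 2)),
      t ∈ Set.Ico (0 : ℝ) ((d : ℝ) / 2) := by
    filter_upwards [self_mem_nhdsWithin,
      eventually_nhdsWithin_of_eventually_nhds (eventually_gt_nhds hhalf)] with t h1 h2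
    exact ⟨h2.le, h1⟩
  have hpos : ∀ᶠ t in nhdsWithin ((d : ℝ) / 2) (Set.Iio ((d : ℝ) / 2)),
      y0 t ∈ Set.Ioi (0 : ℝ) := hmem.mono fun t ht => (hrange t ht).1
  have hT : Tendsto y0 (nhdsWithin ((d : ℝ) / 2) (Set.Iio ((d : ℝ) / 2)))
      (nhdsWithin 0 (Set.Ioi 0)) := tendsto_nhdsWithin_iff.mpr ⟨hlim, hpos⟩
  apply ((stepF d hd).comp hT).congr'
  filter_upwards [hmem] with t ht
  simp only [Function.comp]
  rw [heq t ht]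
end

section
/- Let d ≥ 2, let y₀ : [0, d/2) → (0,1] satisfy the implicit equation Σ_{i=0}^{d-1} y₀(t)(-ln y₀(t))^i (d-i)/i! = d - 2t and y₀(t) → 0 as t → d/2. Define y_j(t) = y₀(t)(-ln y₀(t))^j/j! and s_j = y₀ + ... + y_j. Then for each fixed j with 0 ≤ j ≤ d-1, as t → d/2 from below, both y_j(t) and s_j(t) are asymptotic to (d-1)!·(d-2t) / ( j!·(-ln(d-2t))^{d-1-j} ). -/
open Finset Filter

private lemma sum_div_pow_tendsto (n : ℕ) (c : ℕ → ℝ) (hc : c n = 1) :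
    Tendsto (fun x : ℝ => ∑ i ∈ Finset.range (n+1), c i / x ^ (n - i)) atTop (nhds 1) := by
  have h1 : (1:ℝ) = ∑ i ∈ Finset.range (n+1), (if i = n then (1:ℝ) else 0) := by simp
  rw [h1]
  refine tendsto_finset_sum _ (fun i hi => ?_)
  rcases eq_or_lt_of_le (Nat.lt_succ_iff.mp (Finset.mem_range.mp hi)) with h | h
  · simp only [h, if_pos rfl, Nat.sub_self, pow_zero, div_one, hc]
    exact tendsto_const_nhds
  · simp only [if_neg h.ne]
    exact Tendsto.div_atTop tendsto_const_nhds (tendsto_pow_atTop (Nat.sub_ne_zero_of_lt h))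

theorem stmt6 (d : ℕ) (hd : 2 ≤ d) (y0 : ℝ → ℝ)
    (hrange : ∀ t ∈ Set.Ico (0 : ℝ) (d / 2), 0 < y0 t ∧ y0 t ≤ 1)
    (hcont : ContinuousOn y0 (Set.Ico 0 (d / 2)))
    (hanti : StrictAntiOn y0 (Set.Ico 0 ((d : ℝ) / 2)))
    (heq : ∀ t ∈ Set.Ico (0 : ℝ) (d / 2),
      ∑ i ∈ Finset.range d,
        y0 t * (-Real.log (y0 t)) ^ i * ((d : ℝ) - i) / (Nat.factorial i : ℝ) = d - 2 * t)
    (hlim : Tendsto y0 (nhdsWithin ((d : ℝ) / 2) (Set.Iio ((d : ℝ) / 2))) (nhds 0)) :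
    ∀ j, j ≤ d - 1 →
      Tendsto
        (fun t => (y0 t * (-Real.log (y0 t)) ^ j / (Nat.factorial j : ℝ)) /
          ((Nat.factorial (d - 1) : ℝ) * ((d : ℝ) - 2 * t) /
            ((Nat.factorial j : ℝ) * (-Real.log ((d : ℝ) - 2 * t)) ^ (d - 1 - j))))
        (nhdsWithin ((d : ℝ) / 2) (Set.Iio ((d : ℝ) / 2))) (nhds 1)
      ∧ Tendsto
          (fun t => (∑ i ∈ Finset.range (j + 1),
              y0 t * (-Real.log (y0 t)) ^ i / (Nat.factorial i : ℝ)) /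
            ((Nat.factorial (d - 1) : ℝ) * ((d : ℝ) - 2 * t) /
              ((Nat.factorial j : ℝ) * (-Real.log ((d : ℝ) - 2 * t)) ^ (d - 1 - j))))
          (nhdsWithin ((d : ℝ) / 2) (Set.Iio ((d : ℝ) / 2))) (nhds 1) := by
  intro j hj
  set F := nhdsWithin ((d : ℝ) / 2) (Set.Iio ((d : ℝ) / 2)) with hF
  have hd0 : (0:ℝ) < (d:ℝ) := by exact_mod_cast (by omega : 0 < d)
  set k := d - 1 - j with hk
  have hjk : d - 1 = j + k := by omega
  -- eventual facts
  have hmem : ∀ᶠ t in F, t ∈ Set.Ico (0:ℝ) ((d:ℝ)/2) := by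
    have h1 : ∀ᶠ t in F, t ∈ Set.Iio ((d:ℝ)/2) := eventually_mem_nhdsWithin
    have h2 : ∀ᶠ t in F, (0:ℝ) < t :=
      (eventually_gt_nhds (by positivity : (0:ℝ) < (d:ℝ)/2)).filter_mono nhdsWithin_le_nhds
    filter_upwards [h1, h2] with t h1 h2
    exact ⟨h2.le, h1⟩
  have hy : ∀ᶠ t in F, 0 < y0 t ∧ y0 t ≤ 1 := hmem.mono (fun t ht => hrange t ht)
  have hy0pos : ∀ᶠ t in F, 0 < y0 t := hy.mono fun t h => h.1
  have hd2t : ∀ᶠ t in F, 0 < (d:ℝ) - 2 * t := by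
    filter_upwards [hmem] with t ht
    have := ht.2
    simp only [Set.mem_Ico] at ht
    linarith [ht.2]
  -- L tends to atTop
  have htp : Tendsto y0 F (nhdsWithin 0 (Set.Ioi 0)) := by
    rw [tendsto_nhdsWithin_iff]; exact ⟨hlim, hy0pos⟩
  have hL : Tendsto (fun t => -Real.log (y0 t)) F atTop :=
    tendsto_neg_atBot_atTop.comp (Real.tendsto_log_nhdsGT_zero.comp htp)
  have hLpos : ∀ᶠ t in F, 0 < -Real.log (y0 t) := hL.eventually_gt_atTop 0
  have hfj : (Nat.factorial j : ℝ) ≠ 0 := Nat.cast_ne_zero.mpr (Nat.factorial_ne_zero j)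
  have hfd : (Nat.factorial (d-1) : ℝ) ≠ 0 := Nat.cast_ne_zero.mpr (Nat.factorial_ne_zero _)
  -- key sum identity
  set c : ℕ → ℝ := fun i => ((d:ℝ) - i) * (Nat.factorial (d-1)) / (Nat.factorial i) with hc
  have hccast : c (d-1) = 1 := by
    have : ((d - 1 : ℕ) : ℝ) = (d:ℝ) - 1 := by
      push_cast [Nat.cast_sub (by omega : 1 ≤ d)]; ring
    simp only [hc, this]
    field_simp
    ring
  have key : ∀ᶠ t in F,
      ((d:ℝ) - 2*t) * (Nat.factorial (d-1) : ℝ) / (y0 t * (-Real.log (y0 t))^(d-1))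
      = ∑ i ∈ Finset.range d, c i / (-Real.log (y0 t))^(d-1-i) := by
    filter_upwards [hmem, hy0pos, hLpos] with t htm hypos hLp
    rw [← heq t htm, Finset.sum_mul, Finset.sum_div]
    refine Finset.sum_congr rfl (fun i hi => ?_)
    have hi' : i ≤ d - 1 := by have := Finset.mem_range.mp hi; omega
    have hpow : (-Real.log (y0 t))^(d-1) =
        (-Real.log (y0 t))^i * (-Real.log (y0 t))^(d-1-i) := by
      rw [← pow_add]; congr 1; omega
    have hyne : y0 t ≠ 0 := hypos.ne'
    have hLne : (-Real.log (y0 t)) ≠ 0 := hLp.ne'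
    have hfi : (Nat.factorial i : ℝ) ≠ 0 := Nat.cast_ne_zero.mpr (Nat.factorial_ne_zero i)
    simp only [hc]
    rw [hpow]
    field_simp
  -- R → 1
  have hg : Tendsto (fun t => ∑ i ∈ Finset.range d, c i / (-Real.log (y0 t))^(d-1-i))
      F (nhds 1) := by
    have h := (sum_div_pow_tendsto (d-1) c hccast).comp hL
    have hr : d - 1 + 1 = d := by omega
    rw [hr] at h
    exact h
  have hR : Tendsto (fun t =>
      ((d:ℝ) - 2*t) * (Nat.factorial (d-1) : ℝ) / (y0 t * (-Real.log (y0 t))^(d-1)))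
      F (nhds 1) := hg.congr' (key.mono fun t h => h.symm)
  -- A → 1
  have hA : Tendsto (fun t =>
      y0 t * (-Real.log (y0 t))^(d-1) / ((Nat.factorial (d-1) : ℝ) * ((d:ℝ) - 2*t)))
      F (nhds 1) := by
    have h := hR.inv₀ one_ne_zero
    rw [inv_one] at h
    refine h.congr (fun t => ?_)
    rw [inv_div, mul_comm ((d:ℝ) - 2*t) _]
  have hApos : ∀ᶠ t in F, 0 < y0 t * (-Real.log (y0 t))^(d-1) /
      ((Nat.factorial (d-1) : ℝ) * ((d:ℝ) - 2*t)) := by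
    filter_upwards [hy0pos, hLpos, hd2t] with t h1 h2 h3
    have : (0:ℝ) < (Nat.factorial (d-1) : ℝ) := by positivity
    positivity
  have hlogA : Tendsto (fun t => Real.log (y0 t * (-Real.log (y0 t))^(d-1) /
      ((Nat.factorial (d-1) : ℝ) * ((d:ℝ) - 2*t)))) F (nhds 0) := by
    have h := (Real.continuousAt_log one_ne_zero).tendsto.comp hA
    simpa [Function.comp_def] using h
  -- Lt / L → 1
  have hLtL : Tendsto (fun t => (-Real.log ((d:ℝ) - 2*t)) / (-Real.log (y0 t))) F (nhds 1) := by
    have hident : ∀ᶠ t in F, (-Real.log ((d:ℝ) - 2*t)) / (-Real.log (y0 t)) =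
        Real.log (y0 t * (-Real.log (y0 t))^(d-1) /
          ((Nat.factorial (d-1) : ℝ) * ((d:ℝ) - 2*t))) / (-Real.log (y0 t))
        + 1
        - ((d:ℝ)-1) * (Real.log (-Real.log (y0 t)) / (-Real.log (y0 t)))
        + Real.log (Nat.factorial (d-1) : ℝ) / (-Real.log (y0 t)) := by
      filter_upwards [hy0pos, hLpos, hd2t] with t h1 h2 h3
      have hyne : y0 t ≠ 0 := h1.ne'
      have hLne : (-Real.log (y0 t)) ≠ 0 := h2.ne'
      have h2tne : ((d:ℝ) - 2*t) ≠ 0 := h3.ne'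
      have hnum : y0 t * (-Real.log (y0 t))^(d-1) ≠ 0 := by
        exact mul_ne_zero hyne (pow_ne_zero _ hLne)
      have hden : (Nat.factorial (d-1) : ℝ) * ((d:ℝ) - 2*t) ≠ 0 := mul_ne_zero hfd h2tne
      have hlog : Real.log (y0 t * (-Real.log (y0 t))^(d-1) /
          ((Nat.factorial (d-1) : ℝ) * ((d:ℝ) - 2*t)))
          = Real.log (y0 t) + ((d:ℝ)-1) * Real.log (-Real.log (y0 t))
            - (Real.log (Nat.factorial (d-1) : ℝ) + Real.log ((d:ℝ) - 2*t)) := by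
        rw [Real.log_div hnum hden, Real.log_mul hyne (pow_ne_zero _ hLne),
          Real.log_mul hfd h2tne, Real.log_pow]
        have : ((d - 1 : ℕ) : ℝ) = (d:ℝ) - 1 := by
          push_cast [Nat.cast_sub (by omega : 1 ≤ d)]; ring
        rw [this]
      rw [hlog]
      have hLne' : Real.log (y0 t) ≠ 0 := by
        intro h; exact hLne (by rw [h, neg_zero])
      field_simp
      ring
    have h1 : Tendsto (fun t => Real.log (y0 t * (-Real.log (y0 t))^(d-1) /
        ((Nat.factorial (d-1) : ℝ) * ((d:ℝ) - 2*t))) / (-Real.log (y0 t))) F (nhds 0) :=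
      hlogA.div_atTop hL
    have h2 : Tendsto (fun t => Real.log (-Real.log (y0 t)) / (-Real.log (y0 t))) F (nhds 0) :=
      (Real.isLittleO_log_id_atTop.tendsto_div_nhds_zero).comp hL
    have h3 : Tendsto (fun t => Real.log (Nat.factorial (d-1) : ℝ) / (-Real.log (y0 t)))
        F (nhds 0) := tendsto_const_nhds.div_atTop hL
    have := (((h1.add (tendsto_const_nhds : Tendsto (fun _ : ℝ => (1:ℝ)) F (nhds 1))).sub
      (h2.const_mul ((d:ℝ)-1))).add h3)
    rw [show (0:ℝ) + 1 - ((d:ℝ)-1) * 0 + 0 = 1 by ring] at this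
    exact this.congr' (hident.mono fun t h => h.symm)
  -- ratio 1
  have hratio1 : Tendsto
      (fun t => (y0 t * (-Real.log (y0 t)) ^ j / (Nat.factorial j : ℝ)) /
        ((Nat.factorial (d - 1) : ℝ) * ((d : ℝ) - 2 * t) /
          ((Nat.factorial j : ℝ) * (-Real.log ((d : ℝ) - 2 * t)) ^ (d - 1 - j))))
      F (nhds 1) := by
    have h := hA.mul ((hLtL.pow k))
    rw [show (1:ℝ) * 1^k = 1 by ring] at h
    refine h.congr' ?_
    filter_upwards [hy0pos, hLpos, hd2t] with t h1 h2 h3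
    have hLne : (-Real.log (y0 t)) ≠ 0 := h2.ne'
    have h2tne : ((d:ℝ) - 2*t) ≠ 0 := h3.ne'
    rw [div_pow, div_div_eq_mul_div, ← hk, hjk, pow_add]
    field_simp
  refine ⟨hratio1, ?_⟩
  -- ratio 2
  set c' : ℕ → ℝ := fun i => (Nat.factorial j : ℝ) / (Nat.factorial i : ℝ) with hc'
  have hc'j : c' j = 1 := by simp [hc', hfj]
  have hsy : Tendsto (fun t => (∑ i ∈ Finset.range (j + 1),
      y0 t * (-Real.log (y0 t)) ^ i / (Nat.factorial i : ℝ)) /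
      (y0 t * (-Real.log (y0 t)) ^ j / (Nat.factorial j : ℝ))) F (nhds 1) := by
    have h := (sum_div_pow_tendsto j c' hc'j).comp hL
    refine h.congr' ?_
    filter_upwards [hy0pos, hLpos] with t h1 h2
    have hyne : y0 t ≠ 0 := h1.ne'
    have hLne : (-Real.log (y0 t)) ≠ 0 := h2.ne'
    simp only [Function.comp]
    rw [div_div_eq_mul_div, Finset.sum_mul, Finset.sum_div]
    refine (Finset.sum_congr rfl (fun i hi => ?_)).symm
    have hi' : i ≤ j := Nat.lt_succ_iff.mp (Finset.mem_range.mp hi)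
    have hfi : (Nat.factorial i : ℝ) ≠ 0 := Nat.cast_ne_zero.mpr (Nat.factorial_ne_zero i)
    have hpow : (-Real.log (y0 t))^j = (-Real.log (y0 t))^i * (-Real.log (y0 t))^(j-i) := by
      rw [← pow_add]; congr 1; omega
    simp only [hc']
    rw [hpow]
    field_simp
  have h := hsy.mul hratio1
  rw [show (1:ℝ) * 1 = 1 by ring] at h
  refine h.congr' ?_
  filter_upwards [hy0pos, hLpos] with t h1 h2
  have hyjne : y0 t * (-Real.log (y0 t)) ^ j / (Nat.factorial j : ℝ) ≠ 0 := by
    have : (0:ℝ) < (Nat.factorial j : ℝ) := by positivity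
    positivity
  rw [div_mul_div_comm, mul_comm (∑ i ∈ Finset.range (j + 1),
      y0 t * (-Real.log (y0 t)) ^ i / (Nat.factorial i : ℝ)) _, mul_div_mul_left _ _ hyjne]
end

section
/- Under the ODE system for the d-process (y_j' = 2(y_{j-1}-y_j)/s_{d-1}, y₀(0)=1, y_k(0)=0 for k≥1, y₋₁≡0, s_j = Σ_{k≤j} y_k), one has 0 ≤ y_j(t) ≤ s_j(t) ≤ s_{d-1}(t) for all j and all t in [0, d/2), and moreover s_{d-1}(t) ≥ 1 - 2t/d. -/
open Finset

/-- If `f 0 ≥ 0` and `f' > 0` wherever `f < 0` on `[0,T)`, then `f ≥ 0` on `[0,T)`. -/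
private lemma aux_nonneg {f f' : ℝ → ℝ} {T : ℝ}
    (h0 : 0 ≤ f 0)
    (hdv : ∀ t ∈ Set.Ico (0:ℝ) T, HasDerivAt f (f' t) t)
    (hpos : ∀ t ∈ Set.Ico (0:ℝ) T, f t < 0 → 0 < f' t) :
    ∀ t ∈ Set.Ico (0:ℝ) T, 0 ≤ f t := by
  intro t₁ ht₁
  by_contra hneg
  push_neg at hneg
  have ht₁0 : 0 < t₁ := by
    rcases lt_or_eq_of_le ht₁.1 with h | h
    · exact h
    · exfalso; rw [← h] at hneg; linarith
  have hsub : Set.Icc (0:ℝ) t₁ ⊆ Set.Ico (0:ℝ) T :=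
    fun x hx => ⟨hx.1, lt_of_le_of_lt hx.2 ht₁.2⟩
  have hcont : ∀ x ∈ Set.Icc (0:ℝ) t₁, ContinuousAt f x :=
    fun x hx => (hdv x (hsub hx)).continuousAt
  set S : Set ℝ := {t | t ∈ Set.Icc (0:ℝ) t₁ ∧ 0 ≤ f t} with hSdef
  have h0S : (0:ℝ) ∈ S := ⟨⟨le_refl 0, le_of_lt ht₁0⟩, h0⟩
  have hSne : S.Nonempty := ⟨0, h0S⟩
  have hbdd : BddAbove S := ⟨t₁, fun x hx => hx.1.2⟩
  set t' := sSup S with ht'def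
  have ht'mem : t' ∈ Set.Icc (0:ℝ) t₁ :=
    ⟨le_csSup hbdd h0S, csSup_le hSne (fun x hx => hx.1.2)⟩
  have hft' : 0 ≤ f t' := by
    have hcl : t' ∈ closure S := csSup_mem_closure hSne hbdd
    have hnb : (nhdsWithin t' S).NeBot := mem_closure_iff_nhdsWithin_neBot.mp hcl
    exact ge_of_tendsto ((hcont t' ht'mem).continuousWithinAt)
      (Filter.eventually_of_mem self_mem_nhdsWithin (fun x (hx : x ∈ S) => hx.2))
  have ht'lt : t' < t₁ := by
    rcases lt_or_eq_of_le ht'mem.2 with h | h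
    · exact h
    · exfalso; rw [h] at hft'; linarith
  have hnegOn : ∀ x ∈ Set.Ioc t' t₁, f x < 0 := by
    intro x hx
    by_contra hge
    push_neg at hge
    have hxS : x ∈ S := ⟨⟨le_trans ht'mem.1 (le_of_lt hx.1), hx.2⟩, hge⟩
    exact absurd (le_csSup hbdd hxS) (not_le.mpr hx.1)
  have hmono : StrictMonoOn f (Set.Icc t' t₁) := by
    apply strictMonoOn_of_deriv_pos (convex_Icc _ _)
    · exact fun x hx =>
        (hcont x ⟨le_trans ht'mem.1 hx.1, hx.2⟩).continuousWithinAt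
    · rw [interior_Icc]
      intro x hx
      have hxI : x ∈ Set.Ico (0:ℝ) T :=
        hsub ⟨le_trans ht'mem.1 (le_of_lt hx.1), le_of_lt hx.2⟩
      rw [(hdv x hxI).deriv]
      exact hpos x hxI (hnegOn x ⟨hx.1, le_of_lt hx.2⟩)
  have := hmono (Set.left_mem_Icc.mpr (le_of_lt ht'lt))
    (Set.right_mem_Icc.mpr (le_of_lt ht'lt)) ht'lt
  linarith

theorem stmt7 (d : ℕ) (hd : 2 ≤ d) (y : ℕ → ℝ → ℝ)
    (hy00 : y 0 0 = 1)
    (hyk0 : ∀ k, 1 ≤ k → k ≤ d - 1 → y k 0 = 0)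
    (hspos : ∀ t ∈ Set.Ico (0 : ℝ) (d / 2), 0 < ∑ k ∈ Finset.range d, y k t)
    (hderiv : ∀ j, j ≤ d - 1 → ∀ t ∈ Set.Ico (0 : ℝ) (d / 2),
      HasDerivAt (y j)
        (2 * ((if j = 0 then 0 else y (j - 1) t) - y j t) / ∑ k ∈ Finset.range d, y k t) t) :
    (∀ j, j ≤ d - 1 → ∀ t ∈ Set.Ico (0 : ℝ) (d / 2),
      0 ≤ y j t ∧ y j t ≤ (∑ k ∈ Finset.range (j + 1), y k t)
        ∧ (∑ k ∈ Finset.range (j + 1), y k t) ≤ ∑ k ∈ Finset.range d, y k t)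
    ∧ ∀ t ∈ Set.Ico (0 : ℝ) (d / 2),
        1 - 2 * t / d ≤ ∑ k ∈ Finset.range d, y k t := by
  -- nonnegativity of each y j
  have key : ∀ j, j ≤ d - 1 → ∀ t ∈ Set.Ico (0:ℝ) (d/2), 0 ≤ y j t := by
    intro j
    induction j with
    | zero =>
      intro hle
      apply aux_nonneg (f' := fun t =>
        2 * ((if (0:ℕ) = 0 then 0 else y (0-1) t) - y 0 t) / ∑ k ∈ Finset.range d, y k t)
      · rw [hy00]; norm_num
      · exact hderiv 0 hle
      · intro t ht hneg
        apply div_pos _ (hspos t ht)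
        rw [if_pos rfl]
        nlinarith
    | succ n ih =>
      intro hle
      have ihn := ih (by omega)
      apply aux_nonneg (f' := fun t =>
        2 * ((if n+1 = 0 then 0 else y (n+1-1) t) - y (n+1) t) / ∑ k ∈ Finset.range d, y k t)
      · rw [hyk0 (n+1) (by omega) hle]
      · exact hderiv (n+1) hle
      · intro t ht hneg
        simp only [Nat.succ_ne_zero, if_false, Nat.add_sub_cancel]
        apply div_pos _ (hspos t ht)
        have := ihn t ht
        nlinarith
  refine ⟨?_, ?_⟩
  · intro j hj t ht
    refine ⟨key j hj t ht, ?_, ?_⟩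
    · rw [Finset.sum_range_succ]
      have h1 : 0 ≤ ∑ k ∈ Finset.range j, y k t :=
        Finset.sum_nonneg (fun k hk => key k (by
          have := Finset.mem_range.mp hk; omega) t ht)
      linarith
    · apply Finset.sum_le_sum_of_subset_of_nonneg
      · exact Finset.range_subset_range.mpr (by omega)
      · intro k hk _
        exact key k (by have := Finset.mem_range.mp hk; omega) t ht
  · -- the lower bound on the total sum
    obtain ⟨e, he⟩ : ∃ e, d = e + 1 := ⟨d - 1, by omega⟩
    have hed : e = d - 1 := by omega
    set Sf : ℝ → ℝ := fun t => ∑ k ∈ Finset.range d, y k t with hSf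
    set Wf : ℝ → ℝ := fun t => ∑ k ∈ Finset.range d, ((k:ℝ)+1) * y k t with hWf
    have hb : ∀ t, ∀ j : ℕ, (if j + 1 = 0 then (0:ℝ) else y (j+1-1) t) = y j t := by
      intro t j; simp
    -- derivative of Sf
    have hSd : ∀ t ∈ Set.Ico (0:ℝ) (d/2), HasDerivAt Sf (-2 * y e t / Sf t) t := by
      intro t ht
      have h1 : HasDerivAt Sf
          (∑ j ∈ Finset.range d,
            2 * ((if j = 0 then 0 else y (j-1) t) - y j t) / Sf t) t := by
        apply HasDerivAt.fun_sum
        intro j hj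
        exact hderiv j (by have := Finset.mem_range.mp hj; omega) t ht
      convert h1 using 1
      rw [← Finset.sum_div]
      congr 1
      have h2 : ∑ j ∈ Finset.range d,
          (2 * ((if j = 0 then 0 else y (j-1) t) - y j t))
          = 2 * ∑ j ∈ Finset.range d,
            ((if j = 0 then 0 else y (j-1) t) - (if j+1 = 0 then 0 else y (j+1-1) t)) := by
        rw [Finset.mul_sum]
        apply Finset.sum_congr rfl
        intro j hj
        rw [hb t j]
      rw [h2, Finset.sum_range_sub' (f := fun j => if j = 0 then (0:ℝ) else y (j-1) t) d]
      have hd0 : ¬ (d = 0) := by omega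
      rw [if_pos rfl, if_neg hd0, show d - 1 = e from by omega]
      ring
    -- derivative of Wf
    have hsum_b : ∀ t, ∑ j ∈ Finset.range d,
        (if j = 0 then (0:ℝ) else y (j-1) t) = Sf t - y e t := by
      intro t
      rw [he, Finset.sum_range_succ' (f := fun j => if j = 0 then (0:ℝ) else y (j-1) t) e]
      rw [if_pos rfl, add_zero]
      have h1 : ∑ j ∈ Finset.range e, (if j + 1 = 0 then (0:ℝ) else y (j+1-1) t)
          = ∑ j ∈ Finset.range e, y j t := by
        apply Finset.sum_congr rfl; intro j hj; rw [hb t j]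
      rw [h1, hSf]
      simp only [he, Finset.sum_range_succ]
      ring
    have hWd : ∀ t ∈ Set.Ico (0:ℝ) (d/2),
        HasDerivAt Wf (2 * (Sf t - ((d:ℝ)+1) * y e t) / Sf t) t := by
      intro t ht
      have h1 : HasDerivAt Wf
          (∑ j ∈ Finset.range d, ((j:ℝ)+1) *
            (2 * ((if j = 0 then 0 else y (j-1) t) - y j t) / Sf t)) t := by
        apply HasDerivAt.fun_sum
        intro j hj
        exact (hderiv j (by have := Finset.mem_range.mp hj; omega) t ht).const_mul _
      convert h1 using 1
      have hS0 : Sf t ≠ 0 := ne_of_gt (hspos t ht)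
      have h2 : ∀ j ∈ Finset.range d, ((j:ℝ)+1) *
            (2 * ((if j = 0 then 0 else y (j-1) t) - y j t) / Sf t)
          = (2 / Sf t) * (((j:ℝ)+1) * ((if j = 0 then 0 else y (j-1) t) - y j t)) := by
        intro j hj; field_simp
      rw [Finset.sum_congr rfl h2, ← Finset.mul_sum]
      -- key algebraic identity for the weighted telescoping sum
      have h3 : ∑ j ∈ Finset.range d,
          (((j:ℝ)+1) * ((if j = 0 then 0 else y (j-1) t) - y j t))
          = Sf t - ((d:ℝ)+1) * y e t := by
        have h4 : ∀ j ∈ Finset.range d,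
            ((j:ℝ)+1) * ((if j = 0 then 0 else y (j-1) t) - y j t)
            = (((j:ℝ) * (if j = 0 then 0 else y (j-1) t))
                - ((((j+1:ℕ)):ℝ) * (if j+1 = 0 then 0 else y (j+1-1) t)))
              + (if j = 0 then 0 else y (j-1) t) := by
          intro j hj
          rw [hb t j]
          push_cast
          ring
        rw [Finset.sum_congr rfl h4, Finset.sum_add_distrib,
          Finset.sum_range_sub' (f := fun j => (j:ℝ) * (if j = 0 then (0:ℝ) else y (j-1) t)) d,
          hsum_b t]
        have hdne : ¬ (d = 0) := by omega
        rw [if_pos rfl, if_neg hdne, show d - 1 = e from by omega]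
        push_cast [he]
        ring
      rw [h3]
      field_simp
    -- the conserved quantity
    intro t ht
    have hFt : ((d:ℝ)+1) * Sf t - Wf t + 2*t = ((d:ℝ)+1) * Sf 0 - Wf 0 + 2*0 := by
      have hFd : ∀ u ∈ Set.Ico (0:ℝ) (d/2),
          HasDerivAt (fun u => ((d:ℝ)+1) * Sf u - Wf u + 2*u) 0 u := by
        intro u hu
        have h1 := ((hSd u hu).const_mul ((d:ℝ)+1)).sub (hWd u hu)
        have h2 := h1.add ((hasDerivAt_id u).const_mul 2)
        have hS0 : Sf u ≠ 0 := ne_of_gt (hspos u hu)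
        have heq : ((d:ℝ)+1) * (-2 * y e u / Sf u)
            - 2 * (Sf u - ((d:ℝ)+1) * y e u) / Sf u + 2 * 1 = 0 := by
          field_simp
          ring
        rw [heq] at h2
        exact h2
      have hsub : Set.Icc (0:ℝ) t ⊆ Set.Ico (0:ℝ) (d/2) :=
        fun x hx => ⟨hx.1, lt_of_le_of_lt hx.2 ht.2⟩
      have := constant_of_has_deriv_right_zero
        (f := fun u => ((d:ℝ)+1) * Sf u - Wf u + 2*u) (a := 0) (b := t)
        (fun x hx => ((hFd x (hsub hx)).continuousAt).continuousWithinAt)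
        (fun x hx => ((hFd x (hsub ⟨hx.1, le_of_lt hx.2⟩)).hasDerivWithinAt))
      exact this t (Set.right_mem_Icc.mpr ht.1)
    have hS0 : Sf 0 = 1 := by
      rw [hSf]
      simp only [he, Finset.sum_range_succ' (f := fun k => y k 0) e]
      rw [hy00]
      have : ∑ j ∈ Finset.range e, y (j+1) 0 = 0 := by
        apply Finset.sum_eq_zero
        intro j hj
        exact hyk0 (j+1) (by omega) (by have := Finset.mem_range.mp hj; omega)
      rw [this]; ring
    have hW0 : Wf 0 = 1 := by
      rw [hWf]
      simp only [he, Finset.sum_range_succ' (f := fun k => ((k:ℝ)+1) * y k 0) e]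
      rw [hy00]
      have : ∑ j ∈ Finset.range e, (((j+1:ℕ):ℝ)+1) * y (j+1) 0 = 0 := by
        apply Finset.sum_eq_zero
        intro j hj
        rw [hyk0 (j+1) (by omega) (by have := Finset.mem_range.mp hj; omega)]
        ring
      rw [this]
      norm_num
    -- W ≥ S
    have hWS : Sf t ≤ Wf t := by
      apply Finset.sum_le_sum
      intro k hk
      have hy := key k (by have := Finset.mem_range.mp hk; omega) t ht
      nlinarith [Nat.cast_nonneg (α := ℝ) k]
    have hdpos : (0:ℝ) < d := by positivity
    have hkey : (d:ℝ) * Sf t ≥ (d:ℝ) - 2*t := by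
      rw [hS0, hW0] at hFt
      nlinarith
    have hmul : (d:ℝ) * (1 - 2*t/(d:ℝ)) = (d:ℝ) - 2*t := by field_simp
    nlinarith [hkey, hmul, hdpos]
end

section
/- Suppose a, η, N are positive reals with η ≤ N/2, and 0 = A₀, A₁, ..., A_m is a submartingale (with respect to some filtration) such that -η ≤ A_{i+1} - A_i ≤ N for all i. Then P(A_m ≤ -a) ≤ exp(-a²/(3ηNm)). (Unlike the classical version, no hypothesis a < ηm is required.) -/
open MeasureTheory Filter


lemma chord_exp {l η N x : ℝ} (hη : 0 < η) (hN : 0 < N)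
    (hx1 : -η ≤ x) (hx2 : x ≤ N) :
    Real.exp (-(l * x)) ≤
      (N * Real.exp (l * η) + η * Real.exp (-(l * N))) / (N + η) +
        (Real.exp (-(l * N)) - Real.exp (l * η)) / (N + η) * x := by
  have hd : (0:ℝ) < N + η := by linarith
  have h := convexOn_exp.2 (Set.mem_univ (l * η)) (Set.mem_univ (-(l * N)))
    (div_nonneg (by linarith : (0:ℝ) ≤ N - x) hd.le)
    (div_nonneg (by linarith : (0:ℝ) ≤ x + η) hd.le)
    (by field_simp; ring)
  simp only [smul_eq_mul] at h
  have key : (N - x)/(N+η) * (l*η) + (x+η)/(N+η) * (-(l*N)) = -(l*x) := by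
    rw [div_mul_eq_mul_div, div_mul_eq_mul_div, ← add_div, div_eq_iff hd.ne']
    ring
  rw [key] at h
  calc Real.exp (-(l*x))
      ≤ (N - x)/(N+η) * Real.exp (l*η) + (x+η)/(N+η) * Real.exp (-(l*N)) := h
    _ = _ := by field_simp; ring

lemma exp_quad {x : ℝ} (hx : |x| ≤ 1) : Real.exp x ≤ 1 + x + 3/4 * x^2 := by
  have h := Real.exp_bound hx (by norm_num : 0 < 2)
  have h2 : |Real.exp x - (1 + x)| ≤ |x|^2 * (3/4) := by
    have : (∑ m ∈ Finset.range 2, x ^ m / m.factorial) = 1 + x := by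
      simp [Finset.sum_range_succ]
    rw [this] at h
    convert h using 2
    norm_num
  have h3 := (abs_le.1 h2).2
  rw [sq_abs] at h3
  linarith

lemma alpha_le {l η N : ℝ} (hη : 0 < η) (hN : 0 < N) (hl : 0 ≤ l)
    (h1 : l * η ≤ 1) (h2 : l * N ≤ 1) :
    (N * Real.exp (l * η) + η * Real.exp (-(l * N))) / (N + η) ≤
      Real.exp (3/4 * (l^2 * η * N)) := by
  have hlη : 0 ≤ l * η := mul_nonneg hl hη.le
  have hlN : 0 ≤ l * N := mul_nonneg hl hN.le
  have e1 : Real.exp (l*η) ≤ 1 + l*η + 3/4*(l*η)^2 := exp_quad (abs_le.2 ⟨by linarith, h1⟩)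
  have e2 : Real.exp (-(l*N)) ≤ 1 - l*N + 3/4*(l*N)^2 := by
    have h := exp_quad (x := -(l*N)) (abs_le.2 ⟨by linarith, by linarith⟩)
    nlinarith [h]
  have hd : (0:ℝ) < N + η := by linarith
  have key : (N * Real.exp (l*η) + η * Real.exp (-(l*N))) / (N+η) ≤ 1 + 3/4*(l^2*η*N) := by
    rw [div_le_iff₀ hd]
    nlinarith [mul_le_mul_of_nonneg_left e1 hN.le, mul_le_mul_of_nonneg_left e2 hη.le]
  exact key.trans (by linarith [Real.add_one_le_exp (3/4*(l^2*η*N))])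


theorem stmt8 {Ω : Type*} {m0 : MeasurableSpace Ω} {μ : Measure Ω}
    [IsProbabilityMeasure μ] {ℱ : Filtration ℕ m0}
    (A : ℕ → Ω → ℝ) (a η N : ℝ) (m : ℕ)
    (ha : 0 < a) (hη : 0 < η) (hN : 0 < N) (hηN : η ≤ N / 2)
    (hA0 : ∀ ω, A 0 ω = 0)
    (hsub : Submartingale A ℱ μ)
    (hbdd : ∀ i, ∀ᵐ ω ∂μ, -η ≤ A (i + 1) ω - A i ω ∧ A (i + 1) ω - A i ω ≤ N) :
    μ {ω | A m ω ≤ -a} ≤ ENNReal.ofReal (Real.exp (-a ^ 2 / (3 * η * N * m))) := by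
  -- trivial case m = 0
  rcases Nat.eq_zero_or_pos m with hm | hm
  · subst hm
    have hempty : {ω | A 0 ω ≤ -a} = ∅ := by
      ext ω; simp only [Set.mem_setOf_eq, Set.mem_empty_iff_false, iff_false, not_le, hA0 ω]
      linarith
    rw [hempty]
    simp
  have hmR : (0:ℝ) < m := by exact_mod_cast hm
  -- a.e. bounds on A i
  have hAB : ∀ i : ℕ, ∀ᵐ ω ∂μ, -η * i ≤ A i ω ∧ A i ω ≤ N * i := by
    intro i
    induction i with
    | zero => filter_upwards with ω; simp [hA0 ω]
    | succ i ih =>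
        filter_upwards [ih, hbdd i] with ω h1 h2
        push_cast
        constructor <;> nlinarith [h1.1, h1.2, h2.1, h2.2]
  -- case a > η m : the event is null
  by_cases ham : a ≤ η * m
  swap
  · have hnull : ∀ᵐ ω ∂μ, ¬ (A m ω ≤ -a) := by
      filter_upwards [hAB m] with ω hω
      push_neg
      nlinarith [hω.1]
    rw [ae_iff] at hnull
    simp only [not_not] at hnull
    rw [hnull]
    exact zero_le
  -- main case
  set l : ℝ := 2 * a / (3 * m * η * N) with hl_def
  have hl : 0 < l := by positivity
  have hlη : l * η ≤ 1 := by
    rw [hl_def, div_mul_eq_mul_div, div_le_one (by positivity)]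
    nlinarith
  have hlN : l * N ≤ 1 := by
    rw [hl_def, div_mul_eq_mul_div, div_le_one (by positivity)]
    nlinarith
  set α : ℝ := (N * Real.exp (l * η) + η * Real.exp (-(l * N))) / (N + η) with hα_def
  have hα : 0 < α := by positivity
  -- measurability and integrability
  have hAsm : ∀ i, StronglyMeasurable (A i) :=
    fun i => (hsub.stronglyMeasurable i).mono (ℱ.le i)
  have hgsmF : ∀ i : ℕ, StronglyMeasurable[ℱ i] (fun ω => Real.exp (-(l * A i ω))) :=
    fun i => Real.continuous_exp.comp_stronglyMeasurable
      (((hsub.stronglyMeasurable i).const_mul l).neg)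
  have hgsm : ∀ i : ℕ, AEStronglyMeasurable (fun ω => Real.exp (-(l * A i ω))) μ :=
    fun i => ((hgsmF i).mono (ℱ.le i)).aestronglyMeasurable
  have hgbd : ∀ i : ℕ, ∀ᵐ ω ∂μ, ‖Real.exp (-(l * A i ω))‖ ≤ Real.exp (l * η * i) := by
    intro i
    filter_upwards [hAB i] with ω hω
    rw [Real.norm_eq_abs, abs_of_pos (Real.exp_pos _), Real.exp_le_exp]
    nlinarith [mul_le_mul_of_nonneg_left hω.1 hl.le]
  have hgint : ∀ i : ℕ, Integrable (fun ω => Real.exp (-(l * A i ω))) μ := fun i =>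
    Integrable.mono' (integrable_const (Real.exp (l * η * i))) (hgsm i) (hgbd i)
  -- the submartingale pull-out inequality
  have hpull : ∀ i : ℕ,
      ∫ ω, Real.exp (-(l * A i ω)) * A i ω ∂μ ≤
        ∫ ω, Real.exp (-(l * A i ω)) * A (i+1) ω ∂μ := by
    intro i
    set g : Ω → ℝ := fun ω => Real.exp (-(l * A i ω)) with hg_def
    have hgi : Integrable (fun ω => g ω * A i ω) μ :=
      (hsub.integrable i).bdd_mul (hgsm i) (hgbd i)
    have hgi1 : Integrable (fun ω => g ω * A (i+1) ω) μ :=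
      (hsub.integrable (i+1)).bdd_mul (hgsm i) (hgbd i)
    have hgc : Integrable (fun ω => g ω * (μ[A (i+1)|ℱ i]) ω) μ :=
      integrable_condExp.bdd_mul (hgsm i) (hgbd i)
    have step1 : ∫ ω, g ω * A i ω ∂μ ≤ ∫ ω, g ω * (μ[A (i+1)|ℱ i]) ω ∂μ := by
      refine integral_mono_ae hgi hgc ?_
      filter_upwards [hsub.ae_le_condExp (Nat.le_succ i)] with ω hω
      exact mul_le_mul_of_nonneg_left hω (Real.exp_pos _).le
    have step2 : ∫ ω, g ω * (μ[A (i+1)|ℱ i]) ω ∂μ = ∫ ω, g ω * A (i+1) ω ∂μ := by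
      have hmul := condExp_mul_of_stronglyMeasurable_left (hgsmF i) hgi1 (hsub.integrable (i+1))
      calc ∫ ω, g ω * (μ[A (i+1)|ℱ i]) ω ∂μ
          = ∫ ω, (μ[g * A (i+1)|ℱ i]) ω ∂μ := (integral_congr_ae hmul).symm
        _ = ∫ ω, (g * A (i+1)) ω ∂μ := integral_condExp (ℱ.le i)
        _ = ∫ ω, g ω * A (i+1) ω ∂μ := rfl
    exact step1.trans_eq step2
  -- one-step bound
  have hstep : ∀ i : ℕ,
      ∫ ω, Real.exp (-(l * A (i+1) ω)) ∂μ ≤ α * ∫ ω, Real.exp (-(l * A i ω)) ∂μ := by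
    intro i
    set g : Ω → ℝ := fun ω => Real.exp (-(l * A i ω)) with hg_def
    set β : ℝ := (Real.exp (-(l * N)) - Real.exp (l * η)) / (N + η) with hβ_def
    have hβ : β ≤ 0 := by
      apply div_nonpos_of_nonpos_of_nonneg _ (by linarith)
      have : Real.exp (-(l * N)) ≤ Real.exp (l * η) := by
        rw [Real.exp_le_exp]
        nlinarith [mul_nonneg hl.le hN.le, mul_nonneg hl.le hη.le]
      linarith
    have hgi : Integrable (fun ω => g ω * A i ω) μ :=
      (hsub.integrable i).bdd_mul (hgsm i) (hgbd i)
    have hgi1 : Integrable (fun ω => g ω * A (i+1) ω) μ :=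
      (hsub.integrable (i+1)).bdd_mul (hgsm i) (hgbd i)
    have hptwise : ∀ᵐ ω ∂μ, Real.exp (-(l * A (i+1) ω)) ≤
        α * g ω + β * (g ω * (A (i+1) ω - A i ω)) := by
      filter_upwards [hbdd i] with ω hω
      have hch := chord_exp (l := l) hη hN hω.1 hω.2
      have hsplit : Real.exp (-(l * A (i+1) ω)) = g ω * Real.exp (-(l * (A (i+1) ω - A i ω))) := by
        rw [hg_def, ← Real.exp_add]
        ring_nf
      rw [hsplit]
      calc g ω * Real.exp (-(l * (A (i+1) ω - A i ω)))
          ≤ g ω * (α + β * (A (i+1) ω - A i ω)) :=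
            mul_le_mul_of_nonneg_left hch (Real.exp_pos _).le
        _ = α * g ω + β * (g ω * (A (i+1) ω - A i ω)) := by ring
    have hrhs_int : Integrable (fun ω => α * g ω + β * (g ω * (A (i+1) ω - A i ω))) μ := by
      apply Integrable.add ((hgint i).const_mul α)
      apply Integrable.const_mul
      have : (fun ω => g ω * (A (i+1) ω - A i ω)) =
          fun ω => g ω * A (i+1) ω - g ω * A i ω := by funext ω; ring
      rw [this]
      exact hgi1.sub hgi
    calc ∫ ω, Real.exp (-(l * A (i+1) ω)) ∂μ
        ≤ ∫ ω, (α * g ω + β * (g ω * (A (i+1) ω - A i ω))) ∂μ :=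
          integral_mono_ae (hgint (i+1)) hrhs_int hptwise
      _ = α * ∫ ω, g ω ∂μ + β * ∫ ω, g ω * (A (i+1) ω - A i ω) ∂μ := by
          rw [integral_add ((hgint i).const_mul α), integral_const_mul, integral_const_mul]
          · apply Integrable.const_mul
            have : (fun ω => g ω * (A (i+1) ω - A i ω)) =
                fun ω => g ω * A (i+1) ω - g ω * A i ω := by funext ω; ring
            rw [this]
            exact hgi1.sub hgi
      _ ≤ α * ∫ ω, g ω ∂μ := by
          have hint_nonneg : 0 ≤ ∫ ω, g ω * (A (i+1) ω - A i ω) ∂μ := by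
            have : (fun ω => g ω * (A (i+1) ω - A i ω)) =
                fun ω => g ω * A (i+1) ω - g ω * A i ω := by funext ω; ring
            rw [this, integral_sub hgi1 hgi]
            linarith [hpull i]
          nlinarith
  -- induction
  have hInd : ∀ i : ℕ, ∫ ω, Real.exp (-(l * A i ω)) ∂μ ≤ α ^ i := by
    intro i
    induction i with
    | zero => simp [hA0]
    | succ i ih =>
        calc ∫ ω, Real.exp (-(l * A (i+1) ω)) ∂μ ≤ α * ∫ ω, Real.exp (-(l * A i ω)) ∂μ :=
              hstep i
          _ ≤ α * α ^ i := mul_le_mul_of_nonneg_left ih hα.le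
          _ = α ^ (i+1) := by rw [pow_succ]; ring
  -- Markov
  have hmark := mul_meas_ge_le_integral_of_nonneg
    (μ := μ) (f := fun ω => Real.exp (-(l * A m ω)))
    (Filter.Eventually.of_forall fun ω => (Real.exp_pos _).le) (hgint m) (Real.exp (l * a))
  have hsubset : {ω | A m ω ≤ -a} ⊆ {ω | Real.exp (l * a) ≤ Real.exp (-(l * A m ω))} := by
    intro ω hω
    simp only [Set.mem_setOf_eq] at hω ⊢
    rw [Real.exp_le_exp]
    nlinarith [mul_le_mul_of_nonneg_left hω hl.le]
  have hfin : μ {ω | A m ω ≤ -a} ≠ ⊤ := measure_ne_top μ _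
  have htoReal : (μ {ω | A m ω ≤ -a}).toReal ≤ Real.exp (-a ^ 2 / (3 * η * N * m)) := by
    have h1 : (μ {ω | A m ω ≤ -a}).toReal ≤
        (μ {ω | Real.exp (l * a) ≤ Real.exp (-(l * A m ω))}).toReal :=
      ENNReal.toReal_mono (measure_ne_top μ _) (measure_mono hsubset)
    have h2 : Real.exp (l * a) * (μ {ω | A m ω ≤ -a}).toReal ≤ α ^ m := by
      calc Real.exp (l * a) * (μ {ω | A m ω ≤ -a}).toReal
          ≤ Real.exp (l * a) * (μ {ω | Real.exp (l * a) ≤ Real.exp (-(l * A m ω))}).toReal :=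
            mul_le_mul_of_nonneg_left h1 (Real.exp_pos _).le
        _ ≤ ∫ ω, Real.exp (-(l * A m ω)) ∂μ := hmark
        _ ≤ α ^ m := hInd m
    have hαexp : α ^ m ≤ Real.exp (3/4 * (l^2 * η * N) * m) := by
      calc α ^ m ≤ (Real.exp (3/4 * (l^2 * η * N))) ^ m :=
            pow_le_pow_left₀ hα.le (alpha_le hη hN hl.le hlη hlN) m
        _ = Real.exp (3/4 * (l^2 * η * N) * m) := by
            rw [← Real.exp_nat_mul]; ring_nf
    have hkey : (μ {ω | A m ω ≤ -a}).toReal ≤ Real.exp (3/4 * (l^2 * η * N) * m - l * a) := by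
      rw [Real.exp_sub, div_eq_mul_inv, mul_comm, ← div_eq_inv_mul, le_div_iff₀ (Real.exp_pos _)]
      calc (μ {ω | A m ω ≤ -a}).toReal * Real.exp (l * a) ≤ α ^ m := by
            rw [mul_comm]; exact h2
        _ ≤ Real.exp (3/4 * (l^2 * η * N) * m) := hαexp
    have harith : 3/4 * (l^2 * η * N) * m - l * a = -a ^ 2 / (3 * η * N * m) := by
      rw [hl_def]
      field_simp
      ring
    rwa [harith] at hkey
  calc μ {ω | A m ω ≤ -a} = ENNReal.ofReal ((μ {ω | A m ω ≤ -a}).toReal) :=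
        (ENNReal.ofReal_toReal hfin).symm
    _ ≤ ENNReal.ofReal (Real.exp (-a ^ 2 / (3 * η * N * m))) :=
        ENNReal.ofReal_le_ofReal htoReal
end

section
/- Suppose a, η, N are positive reals with η ≤ N/10, and 0 = A₀, A₁, ..., A_m is a supermartingale such that -η ≤ A_{i+1} - A_i ≤ N for all i. Then P(A_m ≥ a) ≤ exp(-a²/(3ηNm)) + exp(-a/(6N)). -/
open MeasureTheory Filter

lemma quad_exp_bound {u : ℝ} (hu : |u| ≤ 1) : Real.exp u ≤ 1 + u + (3 / 4) * u ^ 2 := by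
  have h := Real.exp_bound hu (by norm_num : (0:ℕ) < 3)
  have hs : ∑ m ∈ Finset.range 3, u ^ m / m.factorial = 1 + u + u ^ 2 / 2 := by
    simp [Finset.sum_range_succ]
  rw [hs] at h
  have h2 : |u| ^ 3 ≤ u ^ 2 := by
    calc |u| ^ 3 = |u| ^ 2 * |u| := by ring
      _ ≤ |u| ^ 2 * 1 := by nlinarith [sq_abs u, abs_nonneg u]
      _ = u ^ 2 := by rw [mul_one, sq_abs]
  have h4 := (abs_le.mp h).2
  have h3 : ((Nat.succ 3 : ℝ) / ((Nat.factorial 3 : ℝ) * (3:ℕ))) = 2 / 9 := by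
    norm_num [Nat.factorial]
  rw [h3] at h4
  nlinarith [h4]


lemma stmt9_aux {Ω : Type*} {m0 : MeasurableSpace Ω} {μ : Measure Ω}
    [IsProbabilityMeasure μ] {ℱ : Filtration ℕ m0}
    (A : ℕ → Ω → ℝ) (η N : ℝ) (hη : 0 < η) (hN : 0 < N) (hηN : η ≤ N)
    (hA0 : ∀ ω, A 0 ω = 0)
    (hsup : Supermartingale A ℱ μ)
    (hbdd : ∀ i, ∀ᵐ ω ∂μ, -η ≤ A (i + 1) ω - A i ω ∧ A (i + 1) ω - A i ω ≤ N)
    (l : ℝ) (hl : 0 < l) (hlN : l * N ≤ 1) :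
    ∀ i, ∫ ω, Real.exp (l * A i ω) ∂μ ≤ Real.exp (3 / 4 * l ^ 2 * η * N * i) := by
  -- a.e. boundedness of A i
  have hAbd : ∀ i, ∀ᵐ ω ∂μ, |A i ω| ≤ i * (η + N) := by
    intro i
    induction i with
    | zero => filter_upwards with ω; simp [hA0]
    | succ i ih =>
      filter_upwards [ih, hbdd i] with ω h1 h2
      have : |A (i + 1) ω - A i ω| ≤ η + N := by
        rw [abs_le]; constructor <;> nlinarith [h2.1, h2.2]
      have := abs_sub_abs_le_abs_sub (A (i + 1) ω) (A i ω)
      push_cast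
      nlinarith
  have hsm : ∀ i, StronglyMeasurable[ℱ i] fun ω => Real.exp (l * A i ω) := fun i =>
    (Real.measurable_exp.comp ((hsup.stronglyAdapted i).measurable.const_mul l)).stronglyMeasurable
  have hsm0 : ∀ i, AEStronglyMeasurable (fun ω => Real.exp (l * A i ω)) μ := fun i =>
    (((hsm i).mono (ℱ.le i))).aestronglyMeasurable
  have hexbd : ∀ i, ∀ᵐ ω ∂μ, ‖Real.exp (l * A i ω)‖ ≤ Real.exp (l * (i * (η + N))) := by
    intro i
    filter_upwards [hAbd i] with ω h
    rw [Real.norm_eq_abs, abs_of_pos (Real.exp_pos _), Real.exp_le_exp]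
    have : A i ω ≤ i * (η + N) := le_trans (le_abs_self _) h
    nlinarith
  have h_int_exp : ∀ i, Integrable (fun ω => Real.exp (l * A i ω)) μ := fun i =>
    memLp_one_iff_integrable.mp (MemLp.of_bound (hsm0 i) _ (hexbd i))
  intro i
  induction i with
  | zero => simp [hA0]
  | succ i ih =>
    push_cast
    set f : Ω → ℝ := fun ω => Real.exp (l * A i ω) with hf_def
    set K : ℝ := 1 + 3 / 4 * (l ^ 2 * η * N) with hK_def
    set c : ℝ := l + 3 / 4 * (l ^ 2 * (N - η)) with hc_def
    have hc0 : 0 ≤ c := by rw [hc_def]; nlinarith [sq_nonneg l, hl, hηN]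
    have hfpos : ∀ ω, 0 ≤ f ω := fun ω => (Real.exp_pos _).le
    -- integrability of products
    have h_int_fg : Integrable (fun ω => f ω * A (i + 1) ω) μ :=
      (hsup.integrable (i + 1)).bdd_mul (hsm0 i) (hexbd i)
    have h_int_fA : Integrable (fun ω => f ω * A i ω) μ :=
      (hsup.integrable i).bdd_mul (hsm0 i) (hexbd i)
    -- key step: ∫ f * A (i+1) ≤ ∫ f * A i
    have h_le : ∫ ω, f ω * A (i + 1) ω ∂μ ≤ ∫ ω, f ω * A i ω ∂μ := by
      have hcm : μ[fun ω => f ω * A (i + 1) ω | ℱ i] =ᵐ[μ]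
          fun ω => f ω * (μ[A (i + 1) | ℱ i]) ω :=
        condExp_stronglyMeasurable_mul_of_bound (ℱ.le i) (hsm i)
          (hsup.integrable (i + 1)) _ (hexbd i)
      have hint2 : Integrable (fun ω => f ω * (μ[A (i + 1) | ℱ i]) ω) μ :=
        (integrable_condExp).congr hcm
      calc ∫ ω, f ω * A (i + 1) ω ∂μ
          = ∫ ω, (μ[fun ω => f ω * A (i + 1) ω | ℱ i]) ω ∂μ :=
            (integral_condExp (ℱ.le i)).symm
        _ = ∫ ω, f ω * (μ[A (i + 1) | ℱ i]) ω ∂μ := integral_congr_ae hcm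
        _ ≤ ∫ ω, f ω * A i ω ∂μ := by
            refine integral_mono_ae hint2 h_int_fA ?_
            filter_upwards [hsup.condExp_ae_le (Nat.le_succ i)] with ω hω
            exact mul_le_mul_of_nonneg_left hω (hfpos ω)
    -- pointwise bound
    have hptw : ∀ᵐ ω ∂μ, Real.exp (l * A (i + 1) ω) ≤
        K * f ω + c * (f ω * (A (i + 1) ω - A i ω)) := by
      filter_upwards [hbdd i] with ω hω
      set x : ℝ := A (i + 1) ω - A i ω with hx_def
      have hxabs : |l * x| ≤ 1 := by
        rw [abs_mul, abs_of_pos hl]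
        have hxa : |x| ≤ N := abs_le.2 ⟨by linarith [hω.1], hω.2⟩
        nlinarith
      have hq' : Real.exp (l * x) ≤ 1 + l * x + 3 / 4 * (l * x) ^ 2 :=
        quad_exp_bound hxabs
      have hx2 : x ^ 2 ≤ (N - η) * x + η * N := by nlinarith [hω.1, hω.2]
      have hqq : Real.exp (l * x) ≤ K + c * x := by
        rw [hK_def, hc_def]
        nlinarith [hq', mul_le_mul_of_nonneg_left hx2 (by positivity : (0:ℝ) ≤ 3 / 4 * l ^ 2)]
      have heq : Real.exp (l * A (i + 1) ω) = f ω * Real.exp (l * x) := by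
        show _ = Real.exp (l * A i ω) * Real.exp (l * x)
        rw [← Real.exp_add, hx_def]
        ring_nf
      rw [heq]
      calc f ω * Real.exp (l * x) ≤ f ω * (K + c * x) :=
            mul_le_mul_of_nonneg_left hqq (hfpos ω)
        _ = K * f ω + c * (f ω * x) := by ring
    -- integrate
    have h_int_rhs : Integrable
        (fun ω => K * f ω + c * (f ω * (A (i + 1) ω - A i ω))) μ := by
      have : Integrable (fun ω => f ω * (A (i + 1) ω - A i ω)) μ := by
        have := h_int_fg.sub h_int_fA
        refine this.congr ?_
        filter_upwards with ω
        simp only [Pi.sub_apply]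
        ring
      exact ((h_int_exp i).const_mul K).add (this.const_mul c)
    have step : ∫ ω, Real.exp (l * A (i + 1) ω) ∂μ ≤ K * ∫ ω, f ω ∂μ := by
      calc ∫ ω, Real.exp (l * A (i + 1) ω) ∂μ
          ≤ ∫ ω, (K * f ω + c * (f ω * (A (i + 1) ω - A i ω))) ∂μ :=
            integral_mono_ae (h_int_exp (i + 1)) h_int_rhs hptw
        _ = K * ∫ ω, f ω ∂μ
            + c * ((∫ ω, f ω * A (i + 1) ω ∂μ) - ∫ ω, f ω * A i ω ∂μ) := by
            rw [integral_add ((h_int_exp i).const_mul K)]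
            · rw [integral_const_mul, integral_const_mul]
              congr 1
              rw [← integral_sub h_int_fg h_int_fA]
              congr 1
              apply integral_congr_ae
              filter_upwards with ω
              ring
            · have := h_int_fg.sub h_int_fA
              refine (this.congr ?_).const_mul c
              filter_upwards with ω
              simp only [Pi.sub_apply]
              ring
        _ ≤ K * ∫ ω, f ω ∂μ := by
            have hD : c * ((∫ ω, f ω * A (i + 1) ω ∂μ) - ∫ ω, f ω * A i ω ∂μ) ≤ 0 :=
              mul_nonpos_of_nonneg_of_nonpos hc0 (by linarith)
            linarith
    have hint_nonneg : 0 ≤ ∫ ω, f ω ∂μ := integral_nonneg hfpos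
    have hK1 : K ≤ Real.exp (3 / 4 * l ^ 2 * η * N) := by
      have := Real.add_one_le_exp (3 / 4 * l ^ 2 * η * N)
      linarith
    calc ∫ ω, Real.exp (l * A (i + 1) ω) ∂μ ≤ K * ∫ ω, f ω ∂μ := step
      _ ≤ Real.exp (3 / 4 * l ^ 2 * η * N) * Real.exp (3 / 4 * l ^ 2 * η * N * i) := by
          apply mul_le_mul hK1 ih hint_nonneg (Real.exp_pos _).le
      _ = Real.exp (3 / 4 * l ^ 2 * η * N * (i + 1)) := by
          rw [← Real.exp_add]
          congr 1
          push_cast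
          ring


lemma stmt9_int {Ω : Type*} {m0 : MeasurableSpace Ω} {μ : Measure Ω}
    [IsProbabilityMeasure μ] {ℱ : Filtration ℕ m0}
    (A : ℕ → Ω → ℝ) (η N : ℝ)
    (hA0 : ∀ ω, A 0 ω = 0)
    (hsup : Supermartingale A ℱ μ)
    (hbdd : ∀ i, ∀ᵐ ω ∂μ, -η ≤ A (i + 1) ω - A i ω ∧ A (i + 1) ω - A i ω ≤ N)
    (l : ℝ) (hl : 0 < l) (i : ℕ) :
    Integrable (fun ω => Real.exp (l * A i ω)) μ := by
  have hAbd : ∀ i, ∀ᵐ ω ∂μ, |A i ω| ≤ i * (|η| + |N|) := by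
    intro i
    induction i with
    | zero => filter_upwards with ω; simp [hA0]
    | succ i ih =>
      filter_upwards [ih, hbdd i] with ω h1 h2
      have hb1 : A (i + 1) ω - A i ω ≤ |N| := h2.2.trans (le_abs_self N)
      have hb2 : -(|η| + |N|) ≤ A (i + 1) ω - A i ω := by
        have := le_abs_self η
        have := abs_nonneg N
        linarith [h2.1]
      have habs : |A (i + 1) ω - A i ω| ≤ |η| + |N| := by
        rw [abs_le]
        constructor
        · exact hb2
        · have := abs_nonneg η; linarith
      have := abs_sub_abs_le_abs_sub (A (i + 1) ω) (A i ω)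
      push_cast
      nlinarith
  have hsm0 : AEStronglyMeasurable (fun ω => Real.exp (l * A i ω)) μ :=
    ((Real.measurable_exp.comp
      (((hsup.stronglyAdapted i).mono (ℱ.le i)).measurable.const_mul l))).aestronglyMeasurable
  have hexbd : ∀ᵐ ω ∂μ, ‖Real.exp (l * A i ω)‖ ≤ Real.exp (l * (i * (|η| + |N|))) := by
    filter_upwards [hAbd i] with ω h
    rw [Real.norm_eq_abs, abs_of_pos (Real.exp_pos _), Real.exp_le_exp]
    have : A i ω ≤ i * (|η| + |N|) := le_trans (le_abs_self _) h
    nlinarith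
  exact memLp_one_iff_integrable.mp (MemLp.of_bound hsm0 _ hexbd)

theorem stmt9 {Ω : Type*} {m0 : MeasurableSpace Ω} {μ : Measure Ω}
    [IsProbabilityMeasure μ] {ℱ : Filtration ℕ m0}
    (A : ℕ → Ω → ℝ) (a η N : ℝ) (m : ℕ)
    (ha : 0 < a) (hη : 0 < η) (hN : 0 < N) (hηN : η ≤ N / 10)
    (hA0 : ∀ ω, A 0 ω = 0)
    (hsup : Supermartingale A ℱ μ)
    (hbdd : ∀ i, ∀ᵐ ω ∂μ, -η ≤ A (i + 1) ω - A i ω ∧ A (i + 1) ω - A i ω ≤ N) :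
    μ {ω | a ≤ A m ω} ≤
      ENNReal.ofReal (Real.exp (-a ^ 2 / (3 * η * N * m)))
        + ENNReal.ofReal (Real.exp (-a / (6 * N))) := by
  have hηN' : η ≤ N := hηN.trans (by linarith)
  have key : ∀ l : ℝ, 0 < l → l * N ≤ 1 →
      μ {ω | a ≤ A m ω} ≤
        ENNReal.ofReal (Real.exp (3 / 4 * l ^ 2 * η * N * m - l * a)) := by
    intro l hl hlN
    have hint := stmt9_int A η N hA0 hsup hbdd l hl m
    have h1 := ProbabilityTheory.measure_ge_le_exp_mul_mgf (X := A m) (μ := μ) (t := l)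
      a hl.le hint
    have h3 := stmt9_aux A η N hη hN hηN' hA0 hsup hbdd l hl hlN m
    have h4 : (μ {ω | a ≤ A m ω}).toReal ≤ Real.exp (3 / 4 * l ^ 2 * η * N * m - l * a) := by
      calc (μ {ω | a ≤ A m ω}).toReal
          ≤ Real.exp (-l * a) * ProbabilityTheory.mgf (A m) μ l := h1
        _ ≤ Real.exp (-l * a) * Real.exp (3 / 4 * l ^ 2 * η * N * m) := by
            have hmgf : ProbabilityTheory.mgf (A m) μ l
                = ∫ ω, Real.exp (l * A m ω) ∂μ := rfl
            rw [hmgf]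
            exact mul_le_mul_of_nonneg_left h3 (Real.exp_pos _).le
        _ = Real.exp (3 / 4 * l ^ 2 * η * N * m - l * a) := by
            rw [← Real.exp_add]; ring_nf
    calc μ {ω | a ≤ A m ω}
        = ENNReal.ofReal (μ {ω | a ≤ A m ω}).toReal :=
          (ENNReal.ofReal_toReal (measure_ne_top μ _)).symm
      _ ≤ _ := ENNReal.ofReal_le_ofReal h4
  rcases Nat.eq_zero_or_pos m with hm | hm
  · subst hm
    have h0 : ENNReal.ofReal (Real.exp (-a ^ 2 / (3 * η * N * (0:ℕ)))) = 1 := by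
      norm_num
    rw [h0]
    calc μ {ω | a ≤ A 0 ω} ≤ 1 := prob_le_one
      _ ≤ 1 + ENNReal.ofReal (Real.exp (-a / (6 * N))) := le_self_add
  · have hm' : (1:ℝ) ≤ (m:ℝ) := by exact_mod_cast hm
    have hm0 : (0:ℝ) < (m:ℝ) := by linarith
    by_cases hcase : a ≤ 3 / 2 * η * m
    · set l : ℝ := 2 * a / (3 * η * N * m) with hl_def
      have hl : 0 < l := by positivity
      have hlN : l * N ≤ 1 := by
        have heq : l * N = 2 * a / (3 * η * (m:ℝ)) := by
          rw [hl_def]; field_simp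
        rw [heq, div_le_one (by positivity)]
        linarith
      have hexp : 3 / 4 * l ^ 2 * η * N * m - l * a = -a ^ 2 / (3 * η * N * m) := by
        rw [hl_def]; field_simp; ring
      refine (key l hl hlN).trans ?_
      rw [hexp]
      exact le_self_add
    · set l : ℝ := 1 / N with hl_def
      have hl : 0 < l := by positivity
      have hlN : l * N ≤ 1 := by rw [hl_def]; field_simp; exact le_rfl
      have hexp : 3 / 4 * l ^ 2 * η * N * m - l * a ≤ -a / (6 * N) := by
        rw [hl_def]
        have hL : 3 / 4 * (1 / N) ^ 2 * η * N * (m:ℝ) - 1 / N * a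
            = (3 / 4 * η * m - a) / N := by field_simp
        have hR : -a / (6 * N) = (-a / 6) / N := by ring
        rw [hL, hR, div_le_div_iff_of_pos_right hN]
        nlinarith
      refine (key l hl hlN).trans ?_
      calc ENNReal.ofReal (Real.exp (3 / 4 * l ^ 2 * η * N * m - l * a))
          ≤ ENNReal.ofReal (Real.exp (-a / (6 * N))) :=
            ENNReal.ofReal_le_ofReal (Real.exp_le_exp.2 hexp)
        _ ≤ _ := le_add_self
end

section
/- In the d-process, the conditional expected one-step change of S^{(j)} satisfies: E[S^{(j)}_{i+1} - S^{(j)}_i | G_i] = ( -Y^{(j)}_i·(S^{(d-1)}_i - 1) + Σ_{k≤j} Z^{(k,j)}_i + Σ_{k≥j} Z^{(j,k)}_i ) / ( C(S^{(d-1)}_i, 2) - Z_i ), provided the denominator is positive. -/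
open Finset
open scoped Classical

/-- number of vertices of degree at most `j` -/
noncomputable def Scount {V : Type*} [Fintype V] (G : SimpleGraph V) (j : ℕ) : ℕ :=
  (Finset.univ.filter (fun v => G.degree v ≤ j)).card

/-- number of vertices of degree exactly `j` -/
noncomputable def Ycount {V : Type*} [Fintype V] (G : SimpleGraph V) (j : ℕ) : ℕ :=
  (Finset.univ.filter (fun v => G.degree v = j)).card

/-- number of edges whose endpoint degrees are `(j₁, j₂)` -/
noncomputable def Zcount {V : Type*} [Fintype V] (G : SimpleGraph V) (j₁ j₂ : ℕ) : ℕ :=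
  (G.edgeFinset.filter (fun e => ∃ u v, e = s(u, v) ∧
      min (G.degree u) (G.degree v) = j₁ ∧ max (G.degree u) (G.degree v) = j₂)).card

/-- number of edges both of whose endpoints have degree at most `d - 1`,
i.e. `Z = ∑_{j₁ ≤ j₂ ≤ d-1} Z^{(j₁,j₂)}` -/
noncomputable def Ztotal {V : Type*} [Fintype V] (G : SimpleGraph V) (d : ℕ) : ℕ :=
  (G.edgeFinset.filter (fun e => ∀ v ∈ e, G.degree v ≤ d - 1)).card

/-- the pairs of vertices available to the `d`-process at the current step -/
noncomputable def validPairs {V : Type*} [Fintype V] (G : SimpleGraph V) (d : ℕ) :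
    Finset (Sym2 V) :=
  Finset.univ.filter (fun e : Sym2 V =>
    ¬ e.IsDiag ∧ e ∉ G.edgeSet ∧ ∀ v ∈ e, G.degree v ≤ d - 1)

section Aux

variable {V : Type*} [Fintype V]

lemma sym2_double_sum (s : Finset (Sym2 V))
    (hs : ∀ e ∈ s, ¬ e.IsDiag) (w : V → V → ℝ) (hw : ∀ a b, w a b = w b a) :
    (2:ℝ) * ∑ e ∈ s, Sym2.lift ⟨w, hw⟩ e
      = ∑ u : V, ∑ v : V, if s(u, v) ∈ s then w u v else 0 := by
  rw [← Fintype.sum_prod_type']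
  have h1 : ∀ p : V × V, (if s(p.1, p.2) ∈ s then w p.1 p.2 else 0)
      = if Sym2.mk p.1 p.2 ∈ s then Sym2.lift ⟨w, hw⟩ (Sym2.mk p.1 p.2) else 0 := by
    rintro ⟨a, b⟩; simp [Sym2.lift_mk]
  simp_rw [h1]
  rw [← Finset.sum_filter]
  rw [← Finset.sum_fiberwise_of_maps_to (g := fun p : V × V => Sym2.mk p.1 p.2) (t := s)
    (fun p hp => (Finset.mem_filter.mp hp).2)]
  rw [Finset.mul_sum]
  refine Finset.sum_congr rfl ?_
  intro e he
  induction e using Sym2.ind with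
  | _ a b =>
    have hab : a ≠ b := by
      intro h; exact hs _ he (by simp [h])
    have hfib : (Finset.univ.filter (fun p : V × V => Sym2.mk p.1 p.2 ∈ s)).filter
        (fun p => Sym2.mk p.1 p.2 = s(a,b)) = {(a,b), (b,a)} := by
      ext p
      simp only [Finset.mem_filter, Finset.mem_univ, true_and, Finset.mem_insert,
        Finset.mem_singleton, Sym2.mk_eq_mk_iff]
      rw [show s(a,b) = Sym2.mk (a,b).1 (a,b).2 from rfl, Sym2.mk_eq_mk_iff]
      constructor
      · rintro ⟨-, h | h⟩
        · left; exact h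
        · right; rw [Prod.ext_iff] at h ⊢; exact ⟨h.1, h.2⟩
      · rintro (rfl | rfl)
        · exact ⟨he, Or.inl rfl⟩
        · refine ⟨by rwa [Sym2.eq_swap], Or.inr rfl⟩
    rw [hfib]
    rw [Finset.sum_insert (by simp [hab]), Finset.sum_singleton]
    simp only [Sym2.lift_mk]
    rw [hw b a]; ring

lemma mem_validPairs (G : SimpleGraph V) (d : ℕ) (u v : V) :
    s(u,v) ∈ validPairs G d ↔
      u ≠ v ∧ ¬ G.Adj u v ∧ G.degree u ≤ d-1 ∧ G.degree v ≤ d-1 := by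
  simp [validPairs, and_assoc]

lemma mem_Zfilter (G : SimpleGraph V) (a b : ℕ) (u v : V) :
    s(u,v) ∈ G.edgeFinset.filter (fun e => ∃ x y, e = s(x,y) ∧
        min (G.degree x) (G.degree y) = a ∧ max (G.degree x) (G.degree y) = b)
      ↔ G.Adj u v ∧ min (G.degree u) (G.degree v) = a
          ∧ max (G.degree u) (G.degree v) = b := by
  rw [Finset.mem_filter, SimpleGraph.mem_edgeFinset, SimpleGraph.mem_edgeSet]
  constructor
  · rintro ⟨hadj, x, y, hxy, hmin, hmax⟩
    rcases Sym2.eq_iff.mp hxy with ⟨rfl, rfl⟩ | ⟨rfl, rfl⟩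
    · exact ⟨hadj, hmin, hmax⟩
    · exact ⟨hadj, by rwa [min_comm], by rwa [max_comm]⟩
  · rintro ⟨hadj, hmin, hmax⟩
    exact ⟨hadj, u, v, rfl, hmin, hmax⟩

lemma mem_Ztfilter (G : SimpleGraph V) (d : ℕ) (u v : V) :
    s(u,v) ∈ G.edgeFinset.filter (fun e => ∀ w ∈ e, G.degree w ≤ d - 1)
      ↔ G.Adj u v ∧ G.degree u ≤ d-1 ∧ G.degree v ≤ d-1 := by
  simp [and_assoc]

lemma degree_sup (G : SimpleGraph V) (u v : V)
    (huv : u ≠ v) (hadj : ¬ G.Adj u v) (w : V)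
    (inst : Fintype ((G ⊔ SimpleGraph.fromEdgeSet {s(u,v)}).neighborSet w)) :
    @SimpleGraph.degree V (G ⊔ SimpleGraph.fromEdgeSet {s(u,v)}) w inst
      = G.degree w + (if w = u ∨ w = v then 1 else 0) := by
  classical
  have hi : inst = SimpleGraph.neighborSetFintype _ w := Subsingleton.elim _ _
  subst hi
  have h1 : ∀ x : V, (G ⊔ SimpleGraph.fromEdgeSet {s(u,v)}).Adj w x
      ↔ G.Adj w x ∨ ((w = u ∧ x = v) ∨ (w = v ∧ x = u)) := by
    intro x
    simp only [SimpleGraph.sup_adj, SimpleGraph.fromEdgeSet_adj, Set.mem_singleton_iff,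
      Sym2.eq_iff]
    constructor
    · rintro (h | ⟨(⟨rfl, rfl⟩ | ⟨rfl, rfl⟩), hne⟩)
      · exact Or.inl h
      · exact Or.inr (Or.inl ⟨rfl, rfl⟩)
      · exact Or.inr (Or.inr ⟨rfl, rfl⟩)
    · rintro (h | ⟨rfl, rfl⟩ | ⟨rfl, rfl⟩)
      · exact Or.inl h
      · exact Or.inr ⟨Or.inl ⟨rfl, rfl⟩, huv⟩
      · exact Or.inr ⟨Or.inr ⟨rfl, rfl⟩, huv.symm⟩
  rw [SimpleGraph.degree, SimpleGraph.degree, SimpleGraph.neighborFinset_eq_filter,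
    SimpleGraph.neighborFinset_eq_filter, Finset.card_filter, Finset.card_filter]
  have h2 : ∀ x : V, (if (G ⊔ SimpleGraph.fromEdgeSet {s(u,v)}).Adj w x then 1 else 0)
      = (if G.Adj w x then 1 else 0)
        + ((if w = u then (if x = v then 1 else 0) else 0)
            + (if w = v then (if x = u then 1 else 0) else 0)) := by
    intro x
    rw [if_congr (h1 x) rfl rfl]
    by_cases h₁ : G.Adj w x
    · have : ¬ ((w = u ∧ x = v) ∨ (w = v ∧ x = u)) := by
        rintro (⟨rfl, rfl⟩ | ⟨rfl, rfl⟩)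
        · exact hadj h₁
        · exact hadj h₁.symm
      split_ifs <;> simp_all
    · split_ifs <;> simp_all
  rw [Finset.sum_congr rfl (fun x _ => h2 x)]
  rw [Finset.sum_add_distrib, Finset.sum_add_distrib]
  congr 1
  by_cases hwu : w = u <;> by_cases hwv : w = v <;>
    simp [hwu, hwv, huv, huv.symm, Finset.sum_ite_eq']

lemma scount_sup (G : SimpleGraph V) (j : ℕ) (u v : V)
    (huv : u ≠ v) (hadj : ¬ G.Adj u v) :
    (Scount (G ⊔ SimpleGraph.fromEdgeSet {s(u,v)}) j : ℝ)
      = (Scount G j : ℝ) - ((if G.degree u = j then (1:ℝ) else 0)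
          + (if G.degree v = j then (1:ℝ) else 0)) := by
  classical
  have hcast : ∀ (H : SimpleGraph V), (Scount H j : ℝ)
      = ∑ w : V, (if H.degree w ≤ j then (1:ℝ) else 0) := by
    intro H
    rw [Scount, Finset.card_filter]
    push_cast
    rfl
  rw [hcast, hcast]
  simp only [degree_sup G u v huv hadj]
  have key : ∀ w : V, (if G.degree w + (if w = u ∨ w = v then 1 else 0) ≤ j then (1:ℝ) else 0)
      = (if G.degree w ≤ j then (1:ℝ) else 0)
        - ((if w = u then (if G.degree u = j then (1:ℝ) else 0) else 0)
            + (if w = v then (if G.degree v = j then (1:ℝ) else 0) else 0)) := by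
    intro w
    by_cases hwu : w = u
    · subst hwu
      rw [if_pos (Or.inl rfl), if_neg (show ¬ w = v from huv), if_pos rfl]
      split_ifs <;> simp_all <;> omega
    · by_cases hwv : w = v
      · subst hwv
        rw [if_pos (Or.inr rfl), if_neg hwu, if_pos rfl]
        split_ifs <;> simp_all <;> omega
      · have : ¬ (w = u ∨ w = v) := by tauto
        rw [if_neg this, if_neg hwu, if_neg hwv]
        simp
  refine Eq.trans (Finset.sum_congr rfl (fun w _ => key w)) ?_
  rw [Finset.sum_sub_distrib, Finset.sum_add_distrib]
  simp [Finset.sum_ite_eq']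

/-- doubling for cardinalities -/
lemma sym2_double_card (s : Finset (Sym2 V)) (hs : ∀ e ∈ s, ¬ e.IsDiag) :
    (2:ℝ) * (s.card : ℝ)
      = ∑ u : V, ∑ v : V, if s(u, v) ∈ s then (1:ℝ) else 0 := by
  have h := sym2_double_sum s hs (fun _ _ => (1:ℝ)) (fun _ _ => rfl)
  have h2 : ∀ e : Sym2 V, Sym2.lift ⟨fun _ _ => (1:ℝ), fun _ _ => rfl⟩ e = 1 := by
    intro e; induction e using Sym2.ind with
    | _ a b => simp [Sym2.lift_mk]
  rw [Finset.sum_congr rfl (fun e _ => h2 e), Finset.sum_const, nsmul_eq_mul, mul_one] at h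
  exact h

end Aux

/-- The conditional expected one-step change of `S^{(j)}` in the `d`-process:
the average, over the uniformly chosen valid pair `e`, of
`S^{(j)}(G + e) - S^{(j)}(G)`, equals
`(-Y^{(j)}(S^{(d-1)} - 1) + ∑_{k ≤ j} Z^{(k,j)} + ∑_{k ≥ j} Z^{(j,k)}) / (C(S^{(d-1)}, 2) - Z)`. -/
theorem stmt11 {V : Type*} [Fintype V]
    (G : SimpleGraph V) (d j : ℕ) (hd : 1 ≤ d) (hj : j ≤ d - 1)
    (hdeg : ∀ v, G.degree v ≤ d)
    (hdenpos : 0 < (Scount G (d - 1) : ℝ) * ((Scount G (d - 1) : ℝ) - 1) / 2 - Ztotal G d) :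
    (∑ e ∈ validPairs G d,
        ((Scount (G ⊔ SimpleGraph.fromEdgeSet {e}) j : ℝ) - (Scount G j : ℝ)))
      / (validPairs G d).card
    = (-(Ycount G j : ℝ) * ((Scount G (d - 1) : ℝ) - 1)
        + (∑ k ∈ Finset.range (j + 1), (Zcount G k j : ℝ))
        + (∑ k ∈ Finset.Icc j (d - 1), (Zcount G j k : ℝ)))
      / ((Scount G (d - 1) : ℝ) * ((Scount G (d - 1) : ℝ) - 1) / 2 - (Ztotal G d : ℝ)) := by
  -- abbreviations
  set S : ℝ := (Scount G (d-1) : ℝ) with hS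
  set Y : ℝ := (Ycount G j : ℝ) with hY
  set Z : ℝ := (Ztotal G d : ℝ) with hZ
  set N : ℝ := ((validPairs G d).card : ℝ) with hN
  -- casts as sums
  have hSc : S = ∑ u : V, (if G.degree u ≤ d-1 then (1:ℝ) else 0) := by
    rw [hS, Scount, Finset.card_filter]; push_cast; rfl
  have hYc : Y = ∑ u : V, (if G.degree u = j then (1:ℝ) else 0) := by
    rw [hY, Ycount, Finset.card_filter]; push_cast; rfl
  -- doubling identities
  have hvdiag : ∀ e ∈ validPairs G d, ¬ e.IsDiag := by
    intro e he; exact ((Finset.mem_filter.mp he).2).1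
  have hediag : ∀ s : Finset (Sym2 V), s ⊆ G.edgeFinset → ∀ e ∈ s, ¬ e.IsDiag :=
    fun s hs e he =>
      G.not_isDiag_of_mem_edgeSet (SimpleGraph.mem_edgeFinset.mp (hs he))
  have hN2 : 2 * N = ∑ u : V, ∑ v : V,
      (if u ≠ v ∧ ¬ G.Adj u v ∧ G.degree u ≤ d-1 ∧ G.degree v ≤ d-1 then (1:ℝ) else 0) := by
    rw [hN, sym2_double_card _ hvdiag]
    simp_rw [mem_validPairs]
  have hZ2 : 2 * Z = ∑ u : V, ∑ v : V,
      (if G.Adj u v ∧ G.degree u ≤ d-1 ∧ G.degree v ≤ d-1 then (1:ℝ) else 0) := by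
    rw [hZ, Ztotal, sym2_double_card _ (hediag _ (Finset.filter_subset _ _))]
    simp_rw [mem_Ztfilter]
  have hZc : ∀ a b : ℕ, 2 * (Zcount G a b : ℝ) = ∑ u : V, ∑ v : V,
      (if G.Adj u v ∧ min (G.degree u) (G.degree v) = a ∧ max (G.degree u) (G.degree v) = b
        then (1:ℝ) else 0) := by
    intro a b
    rw [Zcount, sym2_double_card _ (hediag _ (Finset.filter_subset _ _))]
    simp_rw [mem_Zfilter]
  set ZA : ℝ := ∑ k ∈ Finset.range (j + 1), (Zcount G k j : ℝ) with hZA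
  set ZB : ℝ := ∑ k ∈ Finset.Icc j (d - 1), (Zcount G j k : ℝ) with hZB
  -- the lifted weight function
  have hwc : ∀ a b : V, ((if G.degree a = j then (1:ℝ) else 0)
      + (if G.degree b = j then (1:ℝ) else 0))
      = ((if G.degree b = j then (1:ℝ) else 0) + (if G.degree a = j then (1:ℝ) else 0)) :=
    fun a b => add_comm _ _
  set fd : Sym2 V → ℝ := Sym2.lift ⟨fun a b => (if G.degree a = j then (1:ℝ) else 0)
      + (if G.degree b = j then (1:ℝ) else 0), hwc⟩ with hfd
  -- Step B : the numerator sum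
  have hSum : (∑ e ∈ validPairs G d,
      ((Scount (G ⊔ SimpleGraph.fromEdgeSet {e}) j : ℝ) - (Scount G j : ℝ)))
      = - ∑ e ∈ validPairs G d, fd e := by
    rw [← Finset.sum_neg_distrib]
    refine Finset.sum_congr rfl ?_
    intro e
    induction e using Sym2.ind with
    | _ u v =>
      intro he
      obtain ⟨huv, hnadj, -, -⟩ := (mem_validPairs G d u v).mp he
      rw [scount_sup G j u v huv hnadj, hfd, Sym2.lift_mk]
      ring
  -- Step: doubling the numerator sum
  have hfd2 : 2 * ∑ e ∈ validPairs G d, fd e = ∑ u : V, ∑ v : V,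
      (if u ≠ v ∧ ¬ G.Adj u v ∧ G.degree u ≤ d-1 ∧ G.degree v ≤ d-1
        then ((if G.degree u = j then (1:ℝ) else 0) + (if G.degree v = j then (1:ℝ) else 0))
        else 0) := by
    rw [hfd, sym2_double_sum (validPairs G d) hvdiag _ hwc]
    simp_rw [mem_validPairs]
  have hQQ : ∑ u : V, ∑ v : V,
      (if u ≠ v ∧ ¬ G.Adj u v ∧ G.degree u ≤ d-1 ∧ G.degree v ≤ d-1
        then ((if G.degree u = j then (1:ℝ) else 0) + (if G.degree v = j then (1:ℝ) else 0))
        else 0)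
      = 2 * ∑ u : V, ∑ v : V,
        (if (u ≠ v ∧ ¬ G.Adj u v ∧ G.degree u ≤ d-1 ∧ G.degree v ≤ d-1) ∧ G.degree u = j
          then (1:ℝ) else 0) := by
    have hpt : ∀ u v : V,
        (if u ≠ v ∧ ¬ G.Adj u v ∧ G.degree u ≤ d-1 ∧ G.degree v ≤ d-1
          then ((if G.degree u = j then (1:ℝ) else 0) + (if G.degree v = j then (1:ℝ) else 0))
          else 0)
        = (if (u ≠ v ∧ ¬ G.Adj u v ∧ G.degree u ≤ d-1 ∧ G.degree v ≤ d-1) ∧ G.degree u = j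
            then (1:ℝ) else 0)
          + (if (u ≠ v ∧ ¬ G.Adj u v ∧ G.degree u ≤ d-1 ∧ G.degree v ≤ d-1) ∧ G.degree v = j
            then (1:ℝ) else 0) := by
      intro u v
      by_cases hP : u ≠ v ∧ ¬ G.Adj u v ∧ G.degree u ≤ d-1 ∧ G.degree v ≤ d-1 <;>
        simp [hP]
    simp_rw [hpt]
    simp_rw [Finset.sum_add_distrib]
    have hswap : ∑ u : V, ∑ v : V,
        (if (u ≠ v ∧ ¬ G.Adj u v ∧ G.degree u ≤ d-1 ∧ G.degree v ≤ d-1) ∧ G.degree v = j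
          then (1:ℝ) else 0)
        = ∑ u : V, ∑ v : V,
        (if (u ≠ v ∧ ¬ G.Adj u v ∧ G.degree u ≤ d-1 ∧ G.degree v ≤ d-1) ∧ G.degree u = j
          then (1:ℝ) else 0) := by
      rw [Finset.sum_comm]
      refine Finset.sum_congr rfl fun u _ => Finset.sum_congr rfl fun v _ => ?_
      refine if_congr ?_ rfl rfl
      constructor
      · rintro ⟨⟨h1, h2, h3, h4⟩, h5⟩
        exact ⟨⟨fun h => h1 h.symm, fun h => h2 (G.adj_symm h), h4, h3⟩, h5⟩
      · rintro ⟨⟨h1, h2, h3, h4⟩, h5⟩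
        exact ⟨⟨fun h => h1 h.symm, fun h => h2 (G.adj_symm h), h4, h3⟩, h5⟩
    rw [hswap]; ring
  -- abbreviations for the two key double sums
  set Q : ℝ := ∑ u : V, ∑ v : V,
      (if (u ≠ v ∧ ¬ G.Adj u v ∧ G.degree u ≤ d-1 ∧ G.degree v ≤ d-1) ∧ G.degree u = j
        then (1:ℝ) else 0) with hQ
  set W : ℝ := ∑ u : V, ∑ v : V,
      (if G.Adj u v ∧ G.degree u = j ∧ G.degree v ≤ d-1 then (1:ℝ) else 0) with hW
  -- counting identity for N
  have hSS : S * S = ∑ u : V, ∑ v : V,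
      (if G.degree u ≤ d-1 then (1:ℝ) else 0) * (if G.degree v ≤ d-1 then (1:ℝ) else 0) := by
    rw [hSc, Finset.sum_mul_sum]
  have hdiagS : ∑ u : V, ∑ v : V, (if v = u ∧ G.degree u ≤ d-1 then (1:ℝ) else 0) = S := by
    rw [hSc]
    refine Finset.sum_congr rfl fun u _ => ?_
    by_cases hP : G.degree u ≤ d-1 <;> simp [hP, Finset.sum_ite_eq']
  have key1 : 2*N + 2*Z + S = S*S := by
    rw [hN2, hZ2, hSS, ← hdiagS]
    simp_rw [← Finset.sum_add_distrib]
    refine Finset.sum_congr rfl fun u _ => Finset.sum_congr rfl fun v _ => ?_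
    by_cases huv : v = u
    · subst huv
      by_cases h : G.degree v ≤ d-1 <;> simp [h]
    · have huv2 : ¬ u = v := fun h => huv h.symm
      by_cases hadj : G.Adj u v <;> by_cases h1 : G.degree u ≤ d-1 <;>
        by_cases h2 : G.degree v ≤ d-1 <;> simp [huv, huv2, hadj, h1, h2]
  -- counting identity for Q
  have hYS : Y * S = ∑ u : V, ∑ v : V,
      (if G.degree u = j then (1:ℝ) else 0) * (if G.degree v ≤ d-1 then (1:ℝ) else 0) := by
    rw [hYc, hSc, Finset.sum_mul_sum]
  have hdiagY : ∑ u : V, ∑ v : V, (if v = u ∧ G.degree u = j then (1:ℝ) else 0) = Y := by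
    rw [hYc]
    refine Finset.sum_congr rfl fun u _ => ?_
    by_cases hP : G.degree u = j <;> simp [hP, Finset.sum_ite_eq']
  have key3 : Q + Y + W = Y * S := by
    rw [hQ, hW, hYS, ← hdiagY]
    simp_rw [← Finset.sum_add_distrib]
    refine Finset.sum_congr rfl fun u _ => Finset.sum_congr rfl fun v _ => ?_
    by_cases hdj : G.degree u = j
    · have hdu : G.degree u ≤ d - 1 := hdj.le.trans hj
      by_cases huv : v = u
      · subst huv; simp [hdj, hdu, hj]
      · have huv2 : ¬ u = v := fun h => huv h.symm
        by_cases hadj : G.Adj u v <;> by_cases hdv : G.degree v ≤ d-1 <;>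
          simp [huv, huv2, hadj, hdj, hdu, hdv, hj]
    · by_cases huv : v = u
      · subst huv; simp [hdj]
      · simp [hdj]
  -- the two Z-sums
  have hZAeq : 2 * ZA = ∑ u : V, ∑ v : V,
      (if G.Adj u v ∧ max (G.degree u) (G.degree v) = j then (1:ℝ) else 0) := by
    rw [hZA, Finset.mul_sum]
    rw [Finset.sum_congr rfl (fun k _ => hZc k j)]
    rw [Finset.sum_comm]
    refine Finset.sum_congr rfl fun u _ => ?_
    rw [Finset.sum_comm]
    refine Finset.sum_congr rfl fun v _ => ?_
    by_cases h : G.Adj u v ∧ max (G.degree u) (G.degree v) = j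
    · rw [if_pos h]
      have hpt : ∀ k ∈ Finset.range (j+1),
          (if G.Adj u v ∧ min (G.degree u) (G.degree v) = k
              ∧ max (G.degree u) (G.degree v) = j then (1:ℝ) else 0)
          = if k = min (G.degree u) (G.degree v) then (1:ℝ) else 0 := by
        intro k _
        by_cases h2 : k = min (G.degree u) (G.degree v)
        · rw [if_pos h2, if_pos ⟨h.1, h2.symm, h.2⟩]
        · rw [if_neg (fun hc => h2 hc.2.1.symm), if_neg h2]
      rw [Finset.sum_congr rfl hpt, Finset.sum_ite_eq']
      rw [if_pos (Finset.mem_range.mpr (Nat.lt_succ_of_le (min_le_max.trans h.2.le)))]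
    · rw [if_neg h]
      refine Finset.sum_eq_zero fun k _ => ?_
      rw [if_neg]
      rintro ⟨h1, h2, h3⟩
      exact h ⟨h1, h3⟩
  have hZBeq : 2 * ZB = ∑ u : V, ∑ v : V,
      (if G.Adj u v ∧ min (G.degree u) (G.degree v) = j
          ∧ max (G.degree u) (G.degree v) ≤ d-1 then (1:ℝ) else 0) := by
    rw [hZB, Finset.mul_sum]
    rw [Finset.sum_congr rfl (fun k _ => hZc j k)]
    rw [Finset.sum_comm]
    refine Finset.sum_congr rfl fun u _ => ?_
    rw [Finset.sum_comm]
    refine Finset.sum_congr rfl fun v _ => ?_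
    by_cases h : G.Adj u v ∧ min (G.degree u) (G.degree v) = j
        ∧ max (G.degree u) (G.degree v) ≤ d-1
    · rw [if_pos h]
      have hpt : ∀ k ∈ Finset.Icc j (d-1),
          (if G.Adj u v ∧ min (G.degree u) (G.degree v) = j
              ∧ max (G.degree u) (G.degree v) = k then (1:ℝ) else 0)
          = if k = max (G.degree u) (G.degree v) then (1:ℝ) else 0 := by
        intro k _
        by_cases h2 : k = max (G.degree u) (G.degree v)
        · rw [if_pos h2, if_pos ⟨h.1, h.2.1, h2.symm⟩]
        · rw [if_neg (fun hc => h2 hc.2.2.symm), if_neg h2]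
      rw [Finset.sum_congr rfl hpt, Finset.sum_ite_eq']
      rw [if_pos (Finset.mem_Icc.mpr ⟨h.2.1 ▸ min_le_max, h.2.2⟩)]
    · rw [if_neg h]
      refine Finset.sum_eq_zero fun k hk => ?_
      rw [if_neg]
      rintro ⟨h1, h2, h3⟩
      exact h ⟨h1, h2, h3 ▸ (Finset.mem_Icc.mp hk).2⟩
  -- symmetrised W
  have hWsym : W = ∑ u : V, ∑ v : V,
      (if G.Adj u v ∧ G.degree v = j ∧ G.degree u ≤ d-1 then (1:ℝ) else 0) := by
    rw [hW, Finset.sum_comm]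
    refine Finset.sum_congr rfl fun u _ => Finset.sum_congr rfl fun v _ => ?_
    refine if_congr ?_ rfl rfl
    rw [G.adj_comm]
  have key4 : W + W = 2 * ZA + 2 * ZB := by
    nth_rewrite 1 [hW]
    nth_rewrite 1 [hWsym]
    rw [hZAeq, hZBeq]
    simp_rw [← Finset.sum_add_distrib]
    refine Finset.sum_congr rfl fun u _ => Finset.sum_congr rfl fun v _ => ?_
    by_cases hadj : G.Adj u v
    · simp only [hadj, true_and]
      rcases le_total (G.degree u) (G.degree v) with hle | hle
      · rw [min_eq_left hle, max_eq_right hle]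
        split_ifs <;> try norm_num
        all_goals (exfalso; omega)
      · rw [min_eq_right hle, max_eq_left hle]
        split_ifs <;> try norm_num
        all_goals (exfalso; omega)
    · simp [hadj]
  -- assembly
  have hfdQ : ∑ e ∈ validPairs G d, fd e = Q := by
    have h := hfd2
    rw [hQQ] at h
    linarith
  have hWval : W = ZA + ZB := by linarith [key4]
  have hNum : -Y * (S - 1) + ZA + ZB = -(∑ e ∈ validPairs G d, fd e) := by
    rw [hfdQ]
    linarith [key3, hWval]
  have hDen : S * (S - 1) / 2 - Z = N := by linarith [key1]
  rw [hSum, hNum, hDen]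
end

section
/- Fix d ≥ 2 and j with 0 ≤ j ≤ d-1. Define y_j(t) implicitly via y_j = y₀(-ln y₀)^j/j! where y₀ ∈ (0,1) satisfies Σ_{i=0}^{d-1} y₀(-ln y₀)^i(d-i)/i! = d-2t. Then the derivative of y₀ with respect to t is -2y₀/s_{d-1} where s_{d-1} = Σ_{j=0}^{d-1} y₀(-ln y₀)^j/j!; in particular y₀ is strictly decreasing on (0, d/2). -/
open Finset

-- derivative of each term u ↦ u * (-log u)^i * c / i!
lemma term_deriv (i : ℕ) (c : ℝ) (x : ℝ) (hx : x ≠ 0) :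
    HasDerivAt (fun u : ℝ => u * (-Real.log u) ^ i * c / (Nat.factorial i : ℝ))
      (((-Real.log x) ^ i - i * (-Real.log x) ^ (i - 1)) * c / (Nat.factorial i : ℝ)) x := by
  have hlog : HasDerivAt (fun u : ℝ => (-Real.log u) ^ i)
      ((i : ℝ) * (-Real.log x) ^ (i - 1) * (-x⁻¹)) x :=
    ((Real.hasDerivAt_log hx).neg).pow i
  have h1 : HasDerivAt (fun u : ℝ => u * (-Real.log u) ^ i)
      (1 * (-Real.log x) ^ i + x * ((i : ℝ) * (-Real.log x) ^ (i - 1) * (-x⁻¹))) x :=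
    (hasDerivAt_id x).mul hlog
  have h2 := (h1.mul_const c).div_const (Nat.factorial i : ℝ)
  refine h2.congr_deriv ?_
  have hx' : x * x⁻¹ = 1 := mul_inv_cancel₀ hx
  linear_combination (-(i : ℝ) * (-Real.log x) ^ (i - 1) * c / (Nat.factorial i : ℝ)) * hx'

-- telescoping identity
lemma tele_sum (d : ℕ) (L : ℝ) :
    ∑ i ∈ Finset.range d, ((-L) ^ i - i * (-L) ^ (i - 1)) * ((d : ℝ) - i) / (Nat.factorial i : ℝ)
      = ∑ i ∈ Finset.range d, (-L) ^ i / (Nat.factorial i : ℝ) := by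
  set g : ℕ → ℝ := fun j => ((d : ℝ) - j) * j * (-L) ^ (j - 1) / (Nat.factorial j : ℝ) with hg
  have key : ∀ i ∈ Finset.range d,
      ((-L) ^ i - i * (-L) ^ (i - 1)) * ((d : ℝ) - i) / (Nat.factorial i : ℝ)
        - (-L) ^ i / (Nat.factorial i : ℝ)
      = g (i + 1) - g i := by
    intro i _
    simp only [hg]
    rcases i with _ | k
    · simp
    · have hk : (Nat.factorial (k + 1) : ℝ) ≠ 0 := by positivity
      have hk2 : (Nat.factorial (k + 2) : ℝ) ≠ 0 := by positivity
      have e1 : Nat.factorial (k + 2) = (k + 2) * Nat.factorial (k + 1) := rfl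
      have e2 : Nat.factorial (k + 1) = (k + 1) * Nat.factorial k := rfl
      simp only [Nat.succ_sub_one]
      rw [e1]
      have hkk : (Nat.factorial k : ℝ) ≠ 0 := by positivity
      field_simp
      push_cast
      ring
  have := Finset.sum_congr rfl key
  rw [Finset.sum_sub_distrib] at this
  rw [sub_eq_iff_eq_add'] at this
  rw [this]
  rw [Finset.sum_range_sub g]
  simp [hg]

theorem stmt13 (d : ℕ) (hd : 2 ≤ d) (y0 : ℝ → ℝ)
    (hrange : ∀ t ∈ Set.Ioo (0 : ℝ) (d / 2), 0 < y0 t ∧ y0 t < 1)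
    (hcont : ContinuousOn y0 (Set.Ioo 0 (d / 2)))
    (hspos : ∀ t ∈ Set.Ioo (0 : ℝ) (d / 2),
      0 < ∑ i ∈ Finset.range d, y0 t * (-Real.log (y0 t)) ^ i / (Nat.factorial i : ℝ))
    (heq : ∀ t ∈ Set.Ioo (0 : ℝ) (d / 2),
      ∑ i ∈ Finset.range d,
        y0 t * (-Real.log (y0 t)) ^ i * ((d : ℝ) - i) / (Nat.factorial i : ℝ) = d - 2 * t) :
    (∀ t ∈ Set.Ioo (0 : ℝ) (d / 2),
      HasDerivAt y0
        (-2 * y0 t / ∑ i ∈ Finset.range d, y0 t * (-Real.log (y0 t)) ^ i / (Nat.factorial i : ℝ)) t)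
    ∧ StrictAntiOn y0 (Set.Ioo 0 ((d : ℝ) / 2)) := by
  have hopen : IsOpen (Set.Ioo (0 : ℝ) (d / 2)) := isOpen_Ioo
  have main : ∀ t ∈ Set.Ioo (0 : ℝ) (d / 2),
      HasDerivAt y0
        (-2 * y0 t / ∑ i ∈ Finset.range d, y0 t * (-Real.log (y0 t)) ^ i / (Nat.factorial i : ℝ)) t := by
    intro t ht
    obtain ⟨hy0pos, hy0lt⟩ := hrange t ht
    set L := -Real.log (y0 t) with hL
    set S : ℝ := ∑ i ∈ Finset.range d, (-Real.log (y0 t)) ^ i / (Nat.factorial i : ℝ) with hS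
    have hsum_eq : (∑ i ∈ Finset.range d, y0 t * (-Real.log (y0 t)) ^ i / (Nat.factorial i : ℝ))
        = y0 t * S := by
      rw [hS, Finset.mul_sum]
      apply Finset.sum_congr rfl
      intro i _; ring
    have hSpos : 0 < S := by
      have := hspos t ht
      rw [hsum_eq] at this
      exact (mul_pos_iff.mp this).elim (fun h => h.2) (fun h => absurd h.1 (by linarith))
    -- f u := (d - F u) / 2
    set f : ℝ → ℝ := fun u =>
      ((d : ℝ) - ∑ i ∈ Finset.range d, u * (-Real.log u) ^ i * ((d : ℝ) - i) / (Nat.factorial i : ℝ)) / 2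
      with hf
    have hFderiv : HasDerivAt
        (fun u : ℝ => ∑ i ∈ Finset.range d, u * (-Real.log u) ^ i * ((d : ℝ) - i) / (Nat.factorial i : ℝ))
        S (y0 t) := by
      have := HasDerivAt.sum (u := Finset.range d)
        (A := fun i u => u * (-Real.log u) ^ i * ((d : ℝ) - i) / (Nat.factorial i : ℝ))
        (A' := fun i => ((-Real.log (y0 t)) ^ i - i * (-Real.log (y0 t)) ^ (i - 1)) * ((d : ℝ) - i)
          / (Nat.factorial i : ℝ))
        (fun i _ => term_deriv i ((d : ℝ) - i) (y0 t) hy0pos.ne')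
      rw [tele_sum d (Real.log (y0 t)), Finset.sum_fn] at this
      exact this
    have hfderiv : HasDerivAt f (-(S / 2)) (y0 t) := by
      have := ((hasDerivAt_const (y0 t) (d : ℝ)).sub hFderiv).div_const 2
      refine this.congr_deriv ?_
      ring
    have hne : -(S / 2) ≠ 0 := by
      have : (0:ℝ) < S / 2 := by linarith
      linarith [this]
    have hcontat : ContinuousAt y0 t := hcont.continuousAt (hopen.mem_nhds ht)
    have hev : ∀ᶠ u in nhds t, f (y0 u) = u := by
      filter_upwards [hopen.mem_nhds ht] with u hu
      rw [hf]
      simp only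
      rw [heq u hu]
      ring
    have hinv := HasDerivAt.of_local_left_inverse hcontat hfderiv hne hev
    refine hinv.congr_deriv ?_
    rw [hsum_eq]
    field_simp [hSpos.ne']
  refine ⟨main, ?_⟩
  apply StrictAntiOn.mono (s := Set.Ioo (0:ℝ) ((d:ℝ)/2)) ?_ le_rfl
  apply strictAntiOn_of_deriv_neg (convex_Ioo _ _) hcont
  intro t ht
  rw [interior_Ioo] at ht
  have hder := (main t ht).deriv
  rw [hder]
  obtain ⟨hy0pos, _⟩ := hrange t ht
  have hs := hspos t ht
  apply div_neg_of_neg_of_pos _ hs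
  linarith
end
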